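/- arXiv:1702.08289 — 10 statements merged into one kernel-verified Lean document; each statement's English description precedes it below -/
import Mathlib

section
/- Let G be a connected finite simple graph with at least 3 vertices and let T_1, …, T_k (k ≥ 2) be spanning trees of G whose inner-vertex sets I(T_1), …, I(T_k) are pairwise disjoint. If u and v are distinct non-adjacent vertices of G, then for all 1 ≤ i < j ≤ k, the unique path between u and v in T_i and the unique path between u and v in T_j have no common vertex other than u and v, and have no common edge. -/
open SimpleGraph

variable {V : Type*}

/-- `T` is a spanning tree of `G`: a subgraph on all of `V` that is connected and acyclic. -/
def IsSpanningTree (G T : SimpleGraph V) : Prop :=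
  T ≤ G ∧ T.Connected ∧ T.IsAcyclic

/-- The set of inner vertices of `T` (degree at least 2). -/
def innerSet (T : SimpleGraph V) : Set V :=
  {v | 2 ≤ (T.neighborSet v).ncard}

/-- Vertices that are inner vertices of at least two trees of the family. -/
def innerMulti {k : ℕ} (T : Fin k → SimpleGraph V) : Set V :=
  {v | ∃ i j : Fin k, i ≠ j ∧ v ∈ innerSet (T i) ∧ v ∈ innerSet (T j)}

/-- Edges that belong to at least two trees of the family. -/
def edgeMulti {k : ℕ} (T : Fin k → SimpleGraph V) : Set (Sym2 V) :=
  {e | ∃ i j : Fin k, i ≠ j ∧ e ∈ (T i).edgeSet ∧ e ∈ (T j).edgeSet}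

/-- A connected dominating set. -/
def IsConnDomSet (G : SimpleGraph V) (D : Set V) : Prop :=
  (G.induce D).Connected ∧ ∀ v ∉ D, ∃ w ∈ D, G.Adj v w

/-! Every interior vertex of a path has two distinct neighbours on it and is therefore an inner
vertex of the tree, so a common interior vertex of the two paths would be inner in two trees.
A common edge would then have both ends in `{u, v}`, i.e. join the non-adjacent `u` and `v`. -/

lemma mem_innerSet_of_adj_of_adj [Finite V] {T : SimpleGraph V} {a x b : V}
    (ha : T.Adj x a) (hb : T.Adj x b) (hab : a ≠ b) : x ∈ innerSet T :=
  (Set.one_lt_ncard (Set.toFinite _)).2 ⟨a, ha, b, hb, hab⟩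

lemma SimpleGraph.Walk.IsPath.mem_innerSet [Finite V] {T : SimpleGraph V} {u v : V}
    {p : T.Walk u v} (hp : p.IsPath) {x : V} (hx : x ∈ p.support) (hxu : x ≠ u)
    (hxv : x ≠ v) : x ∈ innerSet T := by
  induction p with
  | nil => exact absurd (Walk.mem_support_nil_iff.1 hx) hxu
  | @cons a b c hab p ih =>
    have hxp : x ∈ p.support := by
      simpa [hxu] using hx
    by_cases hxb : x = b
    · subst hxb
      cases p with
      | nil => exact absurd rfl hxv
      | @cons _ y _ hxy p' =>
        have hay : a ≠ y := by
          rintro rfl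
          exact (Walk.cons_isPath_iff _ _).1 hp |>.2 (by simp)
        exact mem_innerSet_of_adj_of_adj hab.symm hxy hay
    · exact ih hp.of_cons hxp hxb hxv

theorem paths_internally_disjoint_general [Fintype V] (G : SimpleGraph V) (k : ℕ)
    (T : Fin k → SimpleGraph V) (hT : ∀ m, IsSpanningTree G (T m))
    (hdisj : ∀ m m' : Fin k, m ≠ m' → Disjoint (innerSet (T m)) (innerSet (T m')))
    (u v : V) (hadj : ¬ G.Adj u v)
    (i j : Fin k) (hij : i < j)
    (p : (T i).Walk u v) (hp : p.IsPath) (q : (T j).Walk u v) (hq : q.IsPath) :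
    (∀ x : V, x ∈ p.support → x ∈ q.support → x = u ∨ x = v) ∧
    (∀ e : Sym2 V, e ∈ p.edges → e ∉ q.edges) := by
  have common_support : ∀ x : V, x ∈ p.support → x ∈ q.support → x = u ∨ x = v := by
    intro x hxp hxq
    by_contra! hx
    exact Set.disjoint_left.1 (hdisj i j hij.ne) (hp.mem_innerSet hxp hx.1 hx.2)
      (hq.mem_innerSet hxq hx.1 hx.2)
  refine ⟨common_support, fun e hep heq => ?_⟩
  induction e using Sym2.ind with
  | _ a b =>
    have hab : G.Adj a b := (hT i).1 (p.edges_subset_edgeSet hep)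
    have ha := common_support a (p.fst_mem_support_of_mem_edges hep)
      (q.fst_mem_support_of_mem_edges heq)
    have hb := common_support b (p.snd_mem_support_of_mem_edges hep)
      (q.snd_mem_support_of_mem_edges heq)
    rcases ha with rfl | rfl <;> rcases hb with rfl | rfl
    exacts [hab.ne rfl, hadj hab, hadj hab.symm, hab.ne rfl]

/-- For non-adjacent vertices `u, v`, the unique `u`-`v` paths in two of the trees
share no vertex other than `u` and `v`, and share no edge. -/
theorem paths_internally_disjoint [Fintype V] (G : SimpleGraph V) (hG : G.Connected)
    (hV : 3 ≤ Fintype.card V) (k : ℕ) (hk : 2 ≤ k)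
    (T : Fin k → SimpleGraph V) (hT : ∀ m, IsSpanningTree G (T m))
    (hdisj : ∀ m m' : Fin k, m ≠ m' → Disjoint (innerSet (T m)) (innerSet (T m')))
    (u v : V) (huv : u ≠ v) (hadj : ¬ G.Adj u v)
    (i j : Fin k) (hij : i < j)
    (p : (T i).Walk u v) (hp : p.IsPath) (q : (T j).Walk u v) (hq : q.IsPath) :
    (∀ x : V, x ∈ p.support → x ∈ q.support → x = u ∨ x = v) ∧
    (∀ e : Sym2 V, e ∈ p.edges → e ∉ q.edges) :=
  paths_internally_disjoint_general G k T hT hdisj u v hadj i j hij p hp q hq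
end

section
/- Let G be a connected finite simple graph and let T_1, …, T_k (k ≥ 2) be spanning trees of G. (1) For every subset A ⊆ V(G) with |A| < k such that the graph G − A (the induced subgraph on V(G) \ A) is disconnected, at least one vertex of A belongs to I(T_1, …, T_k). (2) For every subset B ⊆ E(G) with |B| < k such that the graph G − B (obtained from G by deleting the edges of B) is disconnected, at least one edge of B belongs to E(T_1, …, T_k). -/
/-!
Among `k` trees, a set of fewer than `k` vertices (edges) that meets no shared inner vertex
(edge) is, by pigeonhole, disjoint from the inner vertices (edges) of one of the trees.
Deleting leaves from a tree keeps it connected, and so does deleting edges not in the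
tree; since that tree spans `G`, the set is not a cut.
-/

open SimpleGraph

variable {V : Type*}

theorem Set.exists_disjoint_of_ncard_lt {α ι : Type*} [Finite ι]
    {A : Set α} (hA : A.Finite) {S : ι → Set α} (hcard : A.ncard < Nat.card ι)
    (hS : ∀ a ∈ A, {i | a ∈ S i}.Subsingleton) :
    ∃ i, Disjoint A (S i) := by
  by_contra! hmeet
  choose f hfA hfS using fun i => Set.not_disjoint_iff.1 (hmeet i)
  obtain ⟨i, -, j, -, hij, hfij⟩ := Set.exists_ne_map_eq_of_ncard_lt_of_maps_to
    (s := Set.univ) (by rwa [Set.ncard_univ]) (fun i _ => hfA i) hA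
  exact hij (hS _ (hfA i) (hfS i) (hfij ▸ hfS j))

namespace SimpleGraph

variable {G T : SimpleGraph V}

theorem Preconnected.induce_compl_of_disjoint_innerSet [Finite V] (hTG : T ≤ G)
    (hT : T.Preconnected) {A : Set V} (hA : Disjoint A (innerSet T)) :
    (G.induce Aᶜ).Preconnected := by
  refine (hT.induce_of_degree_eq_one fun v hv => ?_).mono (comap_monotone _ hTG)
  have hleaf : ¬ 2 ≤ (T.neighborSet v).ncard := hA.notMem_of_mem_left (by simpa using hv)
  exact Set.ncard_le_one_iff_subsingleton.1 (by omega)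

theorem Connected.deleteEdges_of_disjoint_edgeSet (hTG : T ≤ G) (hT : T.Connected)
    {B : Set (Sym2 V)} (hB : Disjoint B T.edgeSet) : (G.deleteEdges B).Connected :=
  hT.mono (le_sdiff.2 ⟨hTG, (disjoint_fromEdgeSet _ _).2 hB.symm⟩)

end SimpleGraph

theorem cut_meets_shared_general [Fintype V] (G : SimpleGraph V)
    (k : ℕ) (T : Fin k → SimpleGraph V)
    (hT : ∀ i, IsSpanningTree G (T i)) :
    (∀ A : Set V, A.ncard < k → (Aᶜ : Set V).Nonempty →
      ¬ (G.induce (Aᶜ : Set V)).Connected → ∃ a ∈ A, a ∈ innerMulti T) ∧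
    (∀ B : Set (Sym2 V), B ⊆ G.edgeSet → B.ncard < k →
      ¬ (G.deleteEdges B).Connected → ∃ e ∈ B, e ∈ edgeMulti T) := by
  refine ⟨fun A hA hne hcut => ?_, fun B _ hB hcut => ?_⟩
  · by_contra hshared
    obtain ⟨i, hi⟩ := A.exists_disjoint_of_ncard_lt A.toFinite
      (S := fun i => innerSet (T i)) (by simpa using hA)
      fun a ha i hai j haj => by_contra fun hij => hshared ⟨a, ha, i, j, hij, hai, haj⟩
    have := hne.to_subtype
    exact hcut ⟨(hT i).2.1.preconnected.induce_compl_of_disjoint_innerSet (hT i).1 hi⟩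
  · by_contra hshared
    obtain ⟨i, hi⟩ := B.exists_disjoint_of_ncard_lt B.toFinite
      (S := fun i => (T i).edgeSet) (by simpa using hB)
      fun e he i hei j hej => by_contra fun hij => hshared ⟨e, he, i, j, hij, hei, hej⟩
    exact hcut ((hT i).2.1.deleteEdges_of_disjoint_edgeSet (hT i).1 hi)

/-- Any vertex cut of size `< k` contains a vertex of `I(T₁, …, T_k)`, and any edge cut
of size `< k` contains an edge of `E(T₁, …, T_k)`. -/
theorem cut_meets_shared [Fintype V] (G : SimpleGraph V) (hG : G.Connected)
    (k : ℕ) (hk : 2 ≤ k) (T : Fin k → SimpleGraph V)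
    (hT : ∀ i, IsSpanningTree G (T i)) :
    (∀ A : Set V, A.ncard < k → (Aᶜ : Set V).Nonempty →
      ¬ (G.induce (Aᶜ : Set V)).Connected → ∃ a ∈ A, a ∈ innerMulti T) ∧
    (∀ B : Set (Sym2 V), B ⊆ G.edgeSet → B.ncard < k →
      ¬ (G.deleteEdges B).Connected → ∃ e ∈ B, e ∈ edgeMulti T) :=
  cut_meets_shared_general G k T hT
end

section
/- Let i ≥ 0, j ≥ 0 and k ≥ 2 be integers, and let ℓ ≥ 2k + i − 1. Then the graph G_{k,ℓ} does not contain two (i,j)-disjoint spanning trees. -/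
open SimpleGraph

variable {V : Type*}

/-- The graph `G_{k,ℓ}`: incidence graph of the complete `k`-uniform hypergraph on
`ℓ` vertices. Vertex `Sum.inl i` is adjacent to `Sum.inr A` iff `i ∈ A`. -/
def hyperIncidenceGraph (k l : ℕ) :
    SimpleGraph (Fin l ⊕ {A : Finset (Fin l) // A.card = k}) :=
  SimpleGraph.fromRel (fun x y =>
    match x, y with
    | Sum.inl i, Sum.inr A => i ∈ A.1
    | _, _ => False)

/-!
If `T` is a connected spanning subgraph of `G_{k,ℓ}` and `A` is a `k`-set of original vertices
that are all leaves of `T`, then every `T`-neighbour of `u_A` is a leaf, which forces `T` to be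
the star at `u_A`; this is impossible as soon as `ℓ > k`. Hence each spanning tree has fewer than
`k` leaves among `1, …, ℓ`, so two spanning trees share at least `ℓ - 2(k - 1) > i` inner vertices.
-/

theorem SimpleGraph.Connected.eq_or_adj_of_forall_adj_subsingleton {T : SimpleGraph V}
    (hT : T.Connected) {u : V} (hu : ∀ x, T.Adj u x → (T.neighborSet x).Subsingleton) (v : V) :
    v = u ∨ T.Adj u v := by
  by_contra hv
  obtain ⟨p⟩ := hT.preconnected u v
  obtain ⟨d, -, hd, hd'⟩ := p.exists_boundary_dart {w | w = u ∨ T.Adj u w} (Or.inl rfl) hv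
  rcases hd with hd | hd
  · exact hd' (Or.inr (hd ▸ d.adj))
  · exact hd' (Or.inl (hu _ hd d.adj hd.symm))

section HyperIncidence

variable {k l : ℕ}

@[simp]
theorem hyperIncidenceGraph_adj_inr_inl {A : {A : Finset (Fin l) // A.card = k}} {v : Fin l} :
    (hyperIncidenceGraph k l).Adj (Sum.inr A) (Sum.inl v) ↔ v ∈ A.1 := by
  simp [hyperIncidenceGraph]

@[simp]
theorem hyperIncidenceGraph_not_adj_inr_inr {A B : {A : Finset (Fin l) // A.card = k}} :
    ¬ (hyperIncidenceGraph k l).Adj (Sum.inr A) (Sum.inr B) := by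
  simp [hyperIncidenceGraph]

theorem ncard_leaves_lt {T : SimpleGraph (Fin l ⊕ {A : Finset (Fin l) // A.card = k})}
    (hTG : T ≤ hyperIncidenceGraph k l) (hT : T.Connected) (hkl : k < l) :
    {v : Fin l | Sum.inl v ∉ innerSet T}.ncard < k := by
  by_contra! hleaves
  obtain ⟨A, hA, hAk⟩ := Set.exists_subset_card_eq hleaves
  lift A to Finset (Fin l) using A.toFinite
  rw [Set.ncard_coe_finset] at hAk
  let uA : Fin l ⊕ {A : Finset (Fin l) // A.card = k} := Sum.inr ⟨A, hAk⟩
  have hstar : ∀ x, T.Adj uA x → (T.neighborSet x).Subsingleton := by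
    rintro (v | B) hx
    · have hv : Sum.inl v ∉ innerSet T := hA (by simpa [uA] using hTG hx)
      have hv' : (T.neighborSet (Sum.inl v)).ncard < 2 := by simpa [innerSet] using hv
      exact Set.ncard_le_one_iff_subsingleton.mp (by omega)
    · exact absurd (hTG hx) hyperIncidenceGraph_not_adj_inr_inr
  obtain ⟨w, hw⟩ : ∃ w, w ∉ A := by
    by_contra! hAuniv
    have : A = Finset.univ := Finset.eq_univ_of_forall hAuniv
    simp [this] at hAk
    omega
  rcases hT.eq_or_adj_of_forall_adj_subsingleton hstar (Sum.inl w) with h | h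
  · simp [uA] at h
  · exact hw (by simpa [uA] using hTG h)

end HyperIncidence

/-- For `ℓ ≥ 2k + i - 1`, the graph `G_{k,ℓ}` contains no two (i,j)-disjoint
spanning trees. -/
theorem hyperIncidence_no_two_disjoint_trees (i j k l : ℕ) (hk : 2 ≤ k)
    (hl : 2 * k + i - 1 ≤ l) :
    ¬ ∃ T : Fin 2 → SimpleGraph (Fin l ⊕ {A : Finset (Fin l) // A.card = k}),
        (∀ m, IsSpanningTree (hyperIncidenceGraph k l) (T m)) ∧
        (innerMulti T).ncard ≤ i ∧ (edgeMulti T).ncard ≤ j := by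
  rintro ⟨T, hT, hi, -⟩
  let leaves (m : Fin 2) : Set (Fin l) := {v | Sum.inl v ∉ innerSet (T m)}
  have hleaves (m : Fin 2) : (leaves m).ncard < k :=
    ncard_leaves_lt (hT m).1 (hT m).2.1 (by omega)
  have hshared : Sum.inl '' (leaves 0 ∪ leaves 1)ᶜ ⊆ innerMulti T := by
    rintro _ ⟨v, hv, rfl⟩
    simp only [Set.compl_union, Set.mem_inter_iff, Set.mem_compl_iff, leaves,
      Set.mem_ofPred_eq, not_not] at hv
    exact ⟨0, 1, by decide, hv⟩
  have hunion := Set.ncard_union_le (leaves 0) (leaves 1)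
  have hcompl := Set.ncard_compl_add_ncard (leaves 0 ∪ leaves 1)
  have hmono := Set.ncard_le_ncard hshared
  rw [Set.ncard_image_of_injective _ Sum.inl_injective] at hmono
  simp only [Nat.card_eq_fintype_card, Fintype.card_fin] at hcompl
  have h0 := hleaves 0
  have h1 := hleaves 1
  omega
end

section
/- Let G be a finite simple graph such that 2·δ(G) ≥ |V(G)|, where δ(G) is the minimum degree of G. Then G contains two disjoint connected dominating sets, i.e. there exist disjoint sets D_1, D_2 ⊆ V(G) each of which is a connected dominating set of G. -/
open SimpleGraph

variable {V : Type*}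

/-! ### Auxiliary machinery: reachability within a set of vertices -/

/-- Reachability from `x` inside the vertex set `S`. -/
inductive SReach (G : SimpleGraph V) (S : Set V) (x : V) : V → Prop
  | refl (hx : x ∈ S) : SReach G S x x
  | tail {y z : V} (hxy : SReach G S x y) (hadj : G.Adj y z) (hz : z ∈ S) : SReach G S x z

/-- `S` induces a connected subgraph (expressed via `SReach`). -/
def SConn (G : SimpleGraph V) (S : Set V) : Prop :=
  S.Nonempty ∧ ∀ x ∈ S, ∀ y ∈ S, SReach G S x y

namespace SReach

variable {G : SimpleGraph V} {S T : Set V} {x y z : V}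

lemma mem_right (h : SReach G S x y) : y ∈ S := by
  induction h with
  | refl hx => exact hx
  | tail _ _ hz => exact hz

lemma mem_left (h : SReach G S x y) : x ∈ S := by
  induction h with
  | refl hx => exact hx
  | tail _ _ _ ih => exact ih

lemma trans (h1 : SReach G S x y) (h2 : SReach G S y z) : SReach G S x z := by
  induction h2 with
  | refl _ => exact h1
  | tail _ hadj hz ih => exact ih.tail hadj hz

lemma symm (h : SReach G S x y) : SReach G S y x := by
  induction h with
  | refl hx => exact .refl hx
  | tail hxy hadj hz ih =>
      exact (SReach.tail (.refl hz) hadj.symm hxy.mem_right).trans ih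

lemma mono (hST : S ⊆ T) (h : SReach G S x y) : SReach G T x y := by
  induction h with
  | refl hx => exact .refl (hST hx)
  | tail _ hadj hz ih => exact ih.tail hadj (hST hz)

end SReach

namespace DiracCDS

variable {G : SimpleGraph V} {A B K S : Set V} {a u x y : V}

lemma sconn_insert (hA : SConn G A) (ha : a ∈ A) (hadj : G.Adj a u) :
    SConn G (insert u A) := by
  have hsub : A ⊆ insert u A := Set.subset_insert _ _
  have hu : u ∈ insert u A := Set.mem_insert _ _
  have key : ∀ x ∈ insert u A, SReach G (insert u A) x u := by
    intro x hx
    rcases Set.mem_insert_iff.1 hx with hxu | hx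
    · subst hxu; exact .refl hu
    · exact ((hA.2 x hx a ha).mono hsub).tail hadj hu
  exact ⟨⟨u, hu⟩, fun x hx y hy => (key x hx).trans (key y hy).symm⟩

/-- If `K` is closed in `B \ {u}` then `B \ K` is `SReach`-connected
(provided `B` was). -/
lemma sconn_diff (hB : SConn G B) (hu : u ∈ B) (hK : K ⊆ B \ {u})
    (hcl : ∀ v ∈ K, ∀ w ∈ B \ {u}, G.Adj v w → w ∈ K) :
    SConn G (B \ K) := by
  have huK : u ∉ K := fun h => (hK h).2 rfl
  have hune : u ∈ B \ K := ⟨hu, huK⟩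
  have key : ∀ {w : V}, SReach G B u w → w ∉ K → SReach G (B \ K) u w := by
    intro w hw
    induction hw with
    | refl _ => intro _; exact .refl hune
    | @tail b c hub hadj hc ih =>
        intro hcK
        by_cases hbK : b ∈ K
        · have hcu : c = u := by
            by_contra hne
            exact hcK (hcl b hbK c ⟨hc, hne⟩ hadj)
          subst hcu; exact .refl hune
        · exact (ih hbK).tail hadj ⟨hc, hcK⟩
  refine ⟨⟨u, hune⟩, ?_⟩
  intro p hp q hq
  exact (key (hB.2 u hu p hp.1) hp.2).symm.trans (key (hB.2 u hu q hq.1) hq.2)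

end DiracCDS

section Main

variable [Fintype V] [Nonempty V] (G : SimpleGraph V) [DecidableRel G.Adj]

/-- If all neighbours of `v` lie in `T` then `δ(G) ≤ |T|` (when `v ∉ T`). -/
lemma minDegree_le_ncard_of_nbrs_subset (v : V) (T : Set V)
    (hsub : G.neighborSet v ⊆ T) : G.minDegree ≤ T.ncard := by
  have h1 : G.minDegree ≤ G.degree v := G.minDegree_le_degree v
  have h2 : (G.neighborSet v).ncard = G.degree v := by
    rw [Set.ncard_eq_toFinset_card', ← SimpleGraph.neighborFinset_def]
    rfl
  have h3 : (G.neighborSet v).ncard ≤ T.ncard :=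
    Set.ncard_le_ncard hsub T.toFinite
  omega

/-- Key step: given a connected partition with `|A| < δ`, we can move some vertex
of `Aᶜ` (adjacent to `A`) into `A`, keeping `Aᶜ` connected. -/
lemma dirac_step (h : Fintype.card V ≤ 2 * G.minDegree) (A : Set V)
    (hA : A.Nonempty) (hAd : A.ncard < G.minDegree) (hB : SConn G Aᶜ) :
    ∃ u ∈ Aᶜ, (∃ a ∈ A, G.Adj u a) ∧ SConn G (Aᶜ \ {u}) := by
  classical
  by_contra hcon
  push_neg at hcon
  -- hcon : ∀ u ∈ Aᶜ, (∃ a ∈ A, G.Adj u a) → ¬SConn G (Aᶜ \ {u})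
  obtain ⟨a₀, ha₀⟩ := hA
  -- facts about cardinalities
  have hncompl : A.ncard + Aᶜ.ncard = Fintype.card V := by
    rw [Set.ncard_add_ncard_compl, Nat.card_eq_fintype_card]
  have hδ_lt : G.minDegree < Fintype.card V := by
    obtain ⟨v⟩ := ‹Nonempty V›
    exact lt_of_le_of_lt (G.minDegree_le_degree v) (G.degree_lt_card_verts v)
  -- `S` is nonempty: some vertex of `Aᶜ` is adjacent to `A`.
  have hS : ∃ u, u ∈ Aᶜ ∧ G.Adj u a₀ := by
    by_contra hall
    push_neg at hall
    have hsub : G.neighborSet a₀ ⊆ A \ {a₀} := by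
      intro w hw
      have hadj : G.Adj a₀ w := hw
      refine ⟨?_, ?_⟩
      · by_contra hwA
        exact hall w hwA hadj.symm
      · rintro rfl; exact G.irrefl hadj
    have := minDegree_le_ncard_of_nbrs_subset G a₀ (A \ {a₀}) hsub
    have hd : (A \ {a₀}).ncard = A.ncard - 1 :=
      Set.ncard_diff_singleton_of_mem ha₀
    have hpos : 0 < A.ncard := (Set.ncard_pos A.toFinite).2 ⟨a₀, ha₀⟩
    omega
  obtain ⟨u₀, hu₀B, hu₀adj⟩ := hS
  -- the master descent
  have master : ∀ k (u : V) (K : Set V), u ∈ Aᶜ → (∃ a ∈ A, G.Adj u a) →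
      K ⊆ Aᶜ \ {u} → K.Nonempty →
      (∀ v ∈ K, ∀ w ∈ Aᶜ \ {u}, G.Adj v w → w ∈ K) →
      SConn G (Aᶜ \ K) → K.ncard ≤ k → False := by
    intro k
    induction k with
    | zero =>
        intro u K _ _ _ hKne _ _ hcard
        have := (Set.ncard_pos K.toFinite).2 hKne
        omega
    | succ k ih =>
        intro u K huB huS hKsub hKne hcl hconnBK hcard
        have huK : u ∉ K := fun hk => (hKsub hk).2 rfl
        by_cases hKS : ∃ u' ∈ K, ∃ a ∈ A, G.Adj u' a
        · -- recursion: shrink to a component inside `K`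
          obtain ⟨u', hu'K, hu'S⟩ := hKS
          have hu'B : u' ∈ Aᶜ := (hKsub hu'K).1
          have hnc : ¬ SConn G (Aᶜ \ {u'}) := hcon u' hu'B hu'S
          have hune : u ≠ u' := fun hh => huK (hh ▸ hu'K)
          have huB' : u ∈ Aᶜ \ {u'} := ⟨huB, hune⟩
          have hsub2 : Aᶜ \ K ⊆ Aᶜ \ {u'} :=
            Set.diff_subset_diff_right (Set.singleton_subset_iff.2 hu'K)
          have hz : ∃ z ∈ Aᶜ \ {u'}, ¬ SReach G (Aᶜ \ {u'}) u z := by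
            by_contra hall
            push_neg at hall
            exact hnc ⟨⟨u, huB'⟩, fun p hp q hq => (hall p hp).symm.trans (hall q hq)⟩
          obtain ⟨z, hzB, hzn⟩ := hz
          set K' : Set V := {w | w ∈ Aᶜ \ {u'} ∧ SReach G (Aᶜ \ {u'}) z w} with hK'def
          have hzK' : z ∈ K' := ⟨hzB, .refl hzB⟩
          have hK'sub : K' ⊆ Aᶜ \ {u'} := fun w hw => hw.1
          have hK'cl : ∀ v ∈ K', ∀ w ∈ Aᶜ \ {u'}, G.Adj v w → w ∈ K' :=
            fun v hv w hw hadj => ⟨hw, hv.2.tail hadj hw⟩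
          have hK'K : K' ⊆ K := by
            intro w hw
            by_contra hwK
            have hwBK : w ∈ Aᶜ \ K := ⟨hw.1.1, hwK⟩
            have h1 : SReach G (Aᶜ \ {u'}) u w :=
              (hconnBK.2 u ⟨huB, huK⟩ w hwBK).mono hsub2
            exact hzn (h1.trans hw.2.symm)
          have hu'K' : u' ∉ K' := fun hh => (hh.1).2 rfl
          have hcard' : K'.ncard ≤ k := by
            have h1 : K' ⊆ K \ {u'} := fun w hw => ⟨hK'K hw, fun he => hu'K' (he ▸ hw)⟩
            have h2 : K'.ncard ≤ (K \ {u'}).ncard :=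
              Set.ncard_le_ncard h1 (K \ {u'}).toFinite
            have h3 : (K \ {u'}).ncard = K.ncard - 1 :=
              Set.ncard_diff_singleton_of_mem hu'K
            have hpos : 0 < K.ncard := (Set.ncard_pos K.toFinite).2 ⟨u', hu'K⟩
            omega
          exact ih u' K' hu'B hu'S hK'sub ⟨z, hzK'⟩ hK'cl
            (DiracCDS.sconn_diff hB hu'B hK'sub hK'cl) hcard'
        · -- counting contradiction
          push_neg at hKS
          obtain ⟨v, hv⟩ := hKne
          -- δ ≤ |K|
          have h1 : G.minDegree ≤ K.ncard := by
            have hsub : G.neighborSet v ⊆ insert u K \ {v} := by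
              intro w hw
              have hadj : G.Adj v w := hw
              refine ⟨?_, ?_⟩
              · by_cases hwA : w ∈ A
                · exact absurd hadj (hKS v hv w hwA)
                · by_cases hwu : w = u
                  · exact hwu ▸ Set.mem_insert _ _
                  · exact Set.mem_insert_of_mem _ (hcl v hv w ⟨hwA, hwu⟩ hadj)
              · rintro rfl; exact G.irrefl hadj
            have := minDegree_le_ncard_of_nbrs_subset G v _ hsub
            have e1 : (insert u K).ncard = K.ncard + 1 :=
              Set.ncard_insert_of_notMem huK K.toFinite
            have e2 : (insert u K \ {v}).ncard = (insert u K).ncard - 1 :=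
              Set.ncard_diff_singleton_of_mem (Set.mem_insert_of_mem _ hv)
            omega
          -- δ ≤ |L| where L = (insert u K)ᶜ
          set L : Set V := (insert u K)ᶜ with hLdef
          have ha₀L : a₀ ∈ L := by
            intro hmem
            rcases Set.mem_insert_iff.1 hmem with rfl | hk
            · exact huB ha₀
            · exact (hKsub hk).1 ha₀
          have h2 : G.minDegree ≤ L.ncard := by
            have huL : u ∉ L := fun hh => hh (Set.mem_insert _ _)
            have hsub : G.neighborSet a₀ ⊆ insert u L \ {a₀} := by
              intro w hw
              have hadj : G.Adj a₀ w := hw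
              refine ⟨?_, ?_⟩
              · by_cases hwu : w = u
                · exact hwu ▸ Set.mem_insert _ _
                · refine Set.mem_insert_of_mem _ ?_
                  intro hmem
                  rcases Set.mem_insert_iff.1 hmem with rfl | hk
                  · exact hwu rfl
                  · exact hKS w hk a₀ ha₀ hadj.symm
              · rintro rfl; exact G.irrefl hadj
            have := minDegree_le_ncard_of_nbrs_subset G a₀ _ hsub
            have e1 : (insert u L).ncard = L.ncard + 1 :=
              Set.ncard_insert_of_notMem huL L.toFinite
            have e2 : (insert u L \ {a₀}).ncard = (insert u L).ncard - 1 :=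
              Set.ncard_diff_singleton_of_mem (Set.mem_insert_of_mem _ ha₀L)
            omega
          -- K and L are disjoint, and u is in neither
          have hdisj : Disjoint K L := by
            rw [Set.disjoint_right]
            intro w hwL hwK
            exact hwL (Set.mem_insert_of_mem _ hwK)
          have hKL : (K ∪ L).ncard = K.ncard + L.ncard :=
            Set.ncard_union_eq hdisj K.toFinite L.toFinite
          have huKL : u ∉ K ∪ L := by
            rintro (hk | hl)
            · exact huK hk
            · exact hl (Set.mem_insert _ _)
          have hbound : (K ∪ L).ncard + 1 ≤ Fintype.card V := by
            have e1 : (insert u (K ∪ L)).ncard = (K ∪ L).ncard + 1 :=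
              Set.ncard_insert_of_notMem huKL (K ∪ L).toFinite
            have e2 : (insert u (K ∪ L)).ncard ≤ (Set.univ : Set V).ncard :=
              Set.ncard_le_ncard (Set.subset_univ _) Set.finite_univ
            have e3 : (Set.univ : Set V).ncard = Fintype.card V := by
              rw [Set.ncard_univ, Nat.card_eq_fintype_card]
            omega
          omega
  -- initialize the descent
  have hB2 : ∃ x₀, x₀ ∈ Aᶜ ∧ x₀ ≠ u₀ := by
    have hAcard2 : 1 < Aᶜ.ncard := by omega
    obtain ⟨b, hb, hbne⟩ := Set.exists_ne_of_one_lt_ncard hAcard2 u₀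
    exact ⟨b, hb, hbne⟩
  obtain ⟨x₀, hx₀B, hx₀ne⟩ := hB2
  have hx₀ : x₀ ∈ Aᶜ \ {u₀} := ⟨hx₀B, hx₀ne⟩
  set K₀ : Set V := {w | w ∈ Aᶜ \ {u₀} ∧ SReach G (Aᶜ \ {u₀}) x₀ w} with hK₀def
  have hx₀K₀ : x₀ ∈ K₀ := ⟨hx₀, .refl hx₀⟩
  have hK₀sub : K₀ ⊆ Aᶜ \ {u₀} := fun w hw => hw.1
  have hK₀cl : ∀ v ∈ K₀, ∀ w ∈ Aᶜ \ {u₀}, G.Adj v w → w ∈ K₀ :=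
    fun v hv w hw hadj => ⟨hw, hv.2.tail hadj hw⟩
  exact master K₀.ncard u₀ K₀ hu₀B ⟨a₀, ha₀, hu₀adj⟩ hK₀sub ⟨x₀, hx₀K₀⟩ hK₀cl
    (DiracCDS.sconn_diff hB hu₀B hK₀sub hK₀cl) le_rfl

/-- `SConn` gives connectivity of the induced graph. -/
lemma sconn_induce_connected {D : Set V} (hD : SConn G D) :
    (G.induce D).Connected := by
  obtain ⟨⟨v, hv⟩, hr⟩ := hD
  rw [connected_iff]
  refine ⟨?_, ⟨⟨v, hv⟩⟩⟩
  rintro ⟨x, hx⟩ ⟨y, hy⟩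
  have key : ∀ a b, SReach G D a b → ∀ (ha : a ∈ D) (hb : b ∈ D),
      (G.induce D).Reachable ⟨a, ha⟩ ⟨b, hb⟩ := by
    intro a b hab
    induction hab with
    | refl _ => intro _ _; rfl
    | @tail p q hap hadj hq ih =>
        intro ha hb
        exact (ih ha hap.mem_right).trans (SimpleGraph.Adj.reachable (by simpa using hadj))
  exact key x y (hr x hx y hy) hx hy

end Main

/-- Dirac-type condition: if `2·δ(G) ≥ |V(G)|` then `G` contains two disjoint
connected dominating sets. -/
theorem dirac_two_disjoint_cds [Fintype V] [Nonempty V] (G : SimpleGraph V)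
    [DecidableRel G.Adj] (h : Fintype.card V ≤ 2 * G.minDegree) :
    ∃ D₁ D₂ : Set V, Disjoint D₁ D₂ ∧ IsConnDomSet G D₁ ∧ IsConnDomSet G D₂ := by
  classical
  set n := Fintype.card V with hn
  set δ := G.minDegree with hδ
  have hδ_lt : δ < n := by
    obtain ⟨v⟩ := ‹Nonempty V›
    exact lt_of_le_of_lt (G.minDegree_le_degree v) (G.degree_lt_card_verts v)
  have hn1 : 1 ≤ n := Fintype.card_pos
  have hn2 : 2 ≤ n := by omega
  -- grow a connected partition
  have key : ∀ k, 1 ≤ k → k ≤ n / 2 →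
      ∃ A : Set V, A.ncard = k ∧ SConn G A ∧ SConn G Aᶜ := by
    intro k hk1
    induction k, hk1 using Nat.le_induction with
    | base =>
        intro _
        obtain ⟨v⟩ := ‹Nonempty V›
        refine ⟨{v}, Set.ncard_singleton v, ⟨⟨v, rfl⟩, ?_⟩, ?_, ?_⟩
        · rintro x rfl y rfl
          exact .refl rfl
        · obtain ⟨w, hw, hwv⟩ :=
            Set.exists_ne_of_one_lt_ncard (by
              rw [Set.ncard_univ, Nat.card_eq_fintype_card]; omega :
              1 < (Set.univ : Set V).ncard) v
          exact ⟨w, hwv⟩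
        · -- Conn of {v}ᶜ via common neighbours
          intro x hx y hy
          have hxv : x ≠ v := hx
          have hyv : y ≠ v := hy
          by_cases hxy : x = y
          · exact hxy ▸ .refl hx
          · by_cases hadj : G.Adj x y
            · exact SReach.tail (.refl hx) hadj hy
            · -- find common neighbour z ≠ v
              have hcard : 2 ≤ ((G.neighborFinset x) ∩ (G.neighborFinset y)).card := by
                have hsub : (G.neighborFinset x) ∪ (G.neighborFinset y) ⊆
                    (Finset.univ : Finset V) \ {x, y} := by
                  intro w hw
                  simp only [Finset.mem_union, SimpleGraph.mem_neighborFinset] at hw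
                  simp only [Finset.mem_sdiff, Finset.mem_univ, true_and,
                    Finset.mem_insert, Finset.mem_singleton]
                  push_neg
                  constructor
                  · rintro rfl
                    rcases hw with hw | hw
                    · exact G.irrefl hw
                    · exact hadj hw.symm
                  · rintro rfl
                    rcases hw with hw | hw
                    · exact hadj hw
                    · exact G.irrefl hw
                have hcard_sdiff : ((Finset.univ : Finset V) \ {x, y}).card = n - 2 := by
                  rw [Finset.card_sdiff_of_subset (Finset.subset_univ _)]
                  rw [Finset.card_univ]
                  congr 1
                  rw [Finset.card_insert_of_notMem (by simpa using hxy),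
                    Finset.card_singleton]
                have hunion : ((G.neighborFinset x) ∪ (G.neighborFinset y)).card ≤ n - 2 :=
                  hcard_sdiff ▸ Finset.card_le_card hsub
                have hdegx : δ ≤ (G.neighborFinset x).card := G.minDegree_le_degree x
                have hdegy : δ ≤ (G.neighborFinset y).card := G.minDegree_le_degree y
                have := Finset.card_union_add_card_inter (G.neighborFinset x)
                  (G.neighborFinset y)
                omega
              obtain ⟨z, hz, hzv⟩ := Finset.exists_mem_ne
                (s := (G.neighborFinset x) ∩ (G.neighborFinset y)) (by omega) v
              simp only [Finset.mem_inter, SimpleGraph.mem_neighborFinset] at hz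
              exact SReach.tail (SReach.tail (.refl hx) hz.1 (by exact hzv)) hz.2.symm hy
    | succ m hm ihm =>
        intro hsucc
        obtain ⟨A, hAcard, hAconn, hAcconn⟩ := ihm (by omega)
        have hδ2 : n / 2 ≤ δ := by omega
        have hAd : A.ncard < δ := by omega
        obtain ⟨u, huB, ⟨a, ha, hadj⟩, hconn'⟩ :=
          dirac_step G h A hAconn.1 hAd hAcconn
        have huA : u ∉ A := huB
        refine ⟨insert u A, ?_, ?_, ?_⟩
        · rw [Set.ncard_insert_of_notMem huA A.toFinite, hAcard]
        · exact DiracCDS.sconn_insert hAconn ha hadj.symm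
        · have hcompl : (insert u A)ᶜ = Aᶜ \ {u} := by
            ext w
            simp only [Set.mem_compl_iff, Set.mem_insert_iff, Set.mem_diff,
              Set.mem_singleton_iff]
            tauto
          rw [hcompl]
          exact hconn'
  obtain ⟨A, hAcard, hAconn, hAcconn⟩ := key (n / 2) (by omega) le_rfl
  have hncompl : A.ncard + Aᶜ.ncard = n := by
    rw [Set.ncard_add_ncard_compl, Nat.card_eq_fintype_card]
  -- domination
  have dom : ∀ D : Set V, Dᶜ.ncard ≤ δ → ∀ v ∉ D, ∃ w ∈ D, G.Adj v w := by
    intro D hD v hv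
    by_contra hno
    push_neg at hno
    have hsub : G.neighborSet v ⊆ Dᶜ \ {v} := by
      intro w hw
      have hadj : G.Adj v w := hw
      refine ⟨fun hwD => hno w hwD hadj, ?_⟩
      rintro rfl; exact G.irrefl hadj
    have h1 := minDegree_le_ncard_of_nbrs_subset G v _ hsub
    have h2 : (Dᶜ \ {v}).ncard = Dᶜ.ncard - 1 :=
      Set.ncard_diff_singleton_of_mem hv
    have hpos : 0 < Dᶜ.ncard := (Set.ncard_pos Dᶜ.toFinite).2 ⟨v, hv⟩
    omega
  refine ⟨A, Aᶜ, disjoint_compl_right, ⟨sconn_induce_connected G hAconn, ?_⟩,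
    ⟨sconn_induce_connected G hAcconn, ?_⟩⟩
  · exact dom A (by omega)
  · intro v hv
    exact dom Aᶜ (by rw [compl_compl]; omega) v hv
end

section
/- Let G be a finite simple graph on n ≥ 2 vertices such that d(u) + d(v) ≥ n for every pair of distinct non-adjacent vertices u and v. Then G contains two disjoint connected dominating sets, i.e. there exist disjoint sets D_1, D_2 ⊆ V(G) each of which is a connected dominating set of G. -/
open SimpleGraph

variable {V : Type*}

private lemma hub_connected {V : Type*} (G : SimpleGraph V) (D : Set V) (v₀ : V) (hv₀ : v₀ ∈ D)
    (h : ∀ v, (hv : v ∈ D) → (G.induce D).Reachable ⟨v, hv⟩ ⟨v₀, hv₀⟩) :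
    (G.induce D).Connected := by
  rw [SimpleGraph.connected_iff]
  refine ⟨fun a b => ?_, ⟨⟨v₀, hv₀⟩⟩⟩
  exact (h a.1 a.2).trans (h b.1 b.2).symm

private lemma reachable_induce_mono {V : Type*} (G : SimpleGraph V) {s t : Set V} (hst : s ⊆ t)
    {a b : ↥s} (h : (G.induce s).Reachable a b) :
    (G.induce t).Reachable ⟨a.1, hst a.2⟩ ⟨b.1, hst b.2⟩ :=
  h.map (⟨fun x => ⟨x.1, hst x.2⟩, fun hadj => hadj⟩ : G.induce s →g G.induce t)

private lemma common_neighbor {V : Type*} [Fintype V] (G : SimpleGraph V) [DecidableRel G.Adj]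
    {a b : V} (hab : a ≠ b) (hnadj : ¬ G.Adj a b)
    (hdeg : Fintype.card V ≤ G.degree a + G.degree b) :
    ∃ x, G.Adj a x ∧ G.Adj b x := by
  classical
  have hsub : G.neighborFinset a ∪ G.neighborFinset b ⊆ Finset.univ \ {a, b} := by
    intro x hx
    simp only [Finset.mem_union, SimpleGraph.mem_neighborFinset] at hx
    simp only [Finset.mem_sdiff, Finset.mem_univ, Finset.mem_insert, Finset.mem_singleton,
      true_and]
    push_neg
    constructor
    · rintro rfl; exact hx.elim (fun h => G.irrefl h) (fun h => hnadj h.symm)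
    · rintro rfl; exact hx.elim (fun h => hnadj h) (fun h => G.irrefl h)
  have h1 := Finset.card_le_card hsub
  have h2 := Finset.card_sdiff_add_card_eq_card (Finset.subset_univ ({a, b} : Finset V))
  have h3 : ({a, b} : Finset V).card = 2 := Finset.card_pair hab
  have h4 := Finset.card_union_add_card_inter (G.neighborFinset a) (G.neighborFinset b)
  have hda : (G.neighborFinset a).card = G.degree a := G.card_neighborFinset_eq_degree a
  have hdb : (G.neighborFinset b).card = G.degree b := G.card_neighborFinset_eq_degree b
  have hne : (G.neighborFinset a ∩ G.neighborFinset b).Nonempty := by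
    have h5 : (Finset.univ : Finset V).card = Fintype.card V := Finset.card_univ
    rw [← Finset.card_pos]; omega
  obtain ⟨x, hx⟩ := hne
  rw [Finset.mem_inter, SimpleGraph.mem_neighborFinset, SimpleGraph.mem_neighborFinset] at hx
  exact ⟨x, hx.1, hx.2⟩

/-- Ore-type condition: if `d(u) + d(v) ≥ n` for every pair of distinct non-adjacent
vertices, then `G` contains two disjoint connected dominating sets. -/
theorem ore_two_disjoint_cds [Fintype V] (G : SimpleGraph V) [DecidableRel G.Adj]
    (hn : 2 ≤ Fintype.card V)
    (hOre : ∀ u v : V, u ≠ v → ¬ G.Adj u v →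
      Fintype.card V ≤ G.degree u + G.degree v) :
    ∃ D₁ D₂ : Set V, Disjoint D₁ D₂ ∧ IsConnDomSet G D₁ ∧ IsConnDomSet G D₂ := by
  classical
  haveI hne : Nonempty V := Fintype.card_pos_iff.mp (by omega)
  obtain ⟨u, -, humin⟩ := Finset.exists_min_image (Finset.univ : Finset V) (fun v => G.degree v)
    ⟨Classical.arbitrary V, Finset.mem_univ _⟩
  by_cases hW : ∃ w, w ≠ u ∧ ¬ G.Adj u w
  · obtain ⟨w₀, hw₀u, hw₀adj⟩ := hW
    set WF : Finset V := Finset.univ.filter (fun v => v ≠ u ∧ ¬ G.Adj u v) with hWF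
    set Ws : Set V := ↑WF with hWs
    have hmemWs : ∀ v : V, v ∈ Ws ↔ (v ≠ u ∧ ¬ G.Adj u v) := by
      intro v; simp [hWs, hWF]
    set GW : SimpleGraph ↥Ws := G.induce Ws with hGW
    haveI hdr : DecidableRel GW.Adj := by rw [hGW]; infer_instance
    set k := Fintype.card GW.ConnectedComponent with hk
    have hw₀W : w₀ ∈ Ws := (hmemWs w₀).mpr ⟨hw₀u, hw₀adj⟩
    set fib : GW.ConnectedComponent → Finset ↥Ws :=
      fun c => Finset.univ.filter (fun w => GW.connectedComponentMk w = c) with hfib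
    have hsum : (Finset.univ : Finset ↥Ws).card = ∑ c : GW.ConnectedComponent, (fib c).card :=
      Finset.card_eq_sum_card_fiberwise (fun x _ => Finset.mem_univ _)
    have hfib_pos : ∀ c, 1 ≤ (fib c).card := by
      intro c
      obtain ⟨r, hr⟩ := Quot.exists_rep c
      refine Finset.card_pos.mpr ⟨r, ?_⟩
      rw [hfib, Finset.mem_filter]
      exact ⟨Finset.mem_univ _, hr⟩
    have hfib_le : ∀ c, (fib c).card + k ≤ Fintype.card ↥Ws + 1 := by
      intro c
      have h1 : ∑ c' ∈ Finset.univ.erase c, (fib c').card + (fib c).card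
          = ∑ c', (fib c').card := Finset.sum_erase_add _ _ (Finset.mem_univ c)
      have h2 : ∑ c' ∈ Finset.univ.erase c, 1 ≤ ∑ c' ∈ Finset.univ.erase c, (fib c').card :=
        Finset.sum_le_sum (fun i _ => hfib_pos i)
      rw [Finset.sum_const, smul_eq_mul, mul_one] at h2
      have h3 : (Finset.univ.erase c).card + 1 = k := by
        rw [Finset.card_erase_add_one (Finset.mem_univ c), Finset.card_univ]
      have h4 : (Finset.univ : Finset ↥Ws).card = Fintype.card ↥Ws := Finset.card_univ
      omega
    have hWcard : Fintype.card ↥Ws + (G.degree u + 1) = Fintype.card V := by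
      have h0 : Fintype.card ↥Ws = WF.card := Fintype.card_coe WF
      have h1 : WF = Finset.univ \ insert u (G.neighborFinset u) := by
        ext v
        simp only [hWF, Finset.mem_filter, Finset.mem_univ, true_and, Finset.mem_sdiff,
          Finset.mem_insert, SimpleGraph.mem_neighborFinset]
        tauto
      have h2 := Finset.card_sdiff_add_card_eq_card
        (Finset.subset_univ (insert u (G.neighborFinset u)))
      have h3 : (insert u (G.neighborFinset u)).card = G.degree u + 1 := by
        rw [Finset.card_insert_of_notMem (by simp), G.card_neighborFinset_eq_degree]
      have h5 : WF.card = (Finset.univ \ insert u (G.neighborFinset u)).card := by rw [h1]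
      rw [Finset.card_univ] at h2
      omega
    have hkey : ∀ w, (hw : w ∈ Ws) →
        k + 1 ≤ ((G.neighborFinset w).filter (fun v => G.Adj u v)).card := by
      intro w hw
      obtain ⟨hwu, hwadj⟩ := (hmemWs w).mp hw
      have hdw : Fintype.card V ≤ G.degree u + G.degree w := hOre u w (Ne.symm hwu) hwadj
      have hsplit := Finset.card_filter_add_card_filter_not
        (s := G.neighborFinset w) (p := fun v => G.Adj u v)
      have hwin : (⟨w, hw⟩ : ↥Ws) ∈ fib (GW.connectedComponentMk ⟨w, hw⟩) := by
        rw [hfib, Finset.mem_filter]; exact ⟨Finset.mem_univ _, rfl⟩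
      have hmap : (G.neighborFinset w).filter (fun v => ¬ G.Adj u v) ⊆
          ((fib (GW.connectedComponentMk ⟨w, hw⟩)).erase ⟨w, hw⟩).map
            ⟨Subtype.val, Subtype.val_injective⟩ := by
        intro v hv
        rw [Finset.mem_filter, SimpleGraph.mem_neighborFinset] at hv
        obtain ⟨hadj, hnadj⟩ := hv
        have hvu : v ≠ u := by rintro rfl; exact hwadj hadj.symm
        have hvW : v ∈ Ws := (hmemWs v).mpr ⟨hvu, hnadj⟩
        rw [Finset.mem_map]
        refine ⟨⟨v, hvW⟩, ?_, rfl⟩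
        rw [Finset.mem_erase]
        constructor
        · intro h
          exact (G.ne_of_adj hadj) (congrArg Subtype.val h).symm
        · rw [hfib, Finset.mem_filter]
          refine ⟨Finset.mem_univ _, ?_⟩
          exact SimpleGraph.ConnectedComponent.sound
            (SimpleGraph.Adj.reachable (show GW.Adj ⟨v, hvW⟩ ⟨w, hw⟩ from hadj.symm))
      have hcard1 := Finset.card_le_card hmap
      rw [Finset.card_map] at hcard1
      have hcard2 := Finset.card_erase_add_one hwin
      have hfl := hfib_le (GW.connectedComponentMk ⟨w, hw⟩)
      have hdeg : (G.neighborFinset w).card = G.degree w := G.card_neighborFinset_eq_degree w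
      omega
    have hPx : ∀ c : GW.ConnectedComponent, ∃ x : V, G.Adj u x ∧ G.Adj w₀ x ∧
        ((∀ w : ↥Ws, GW.connectedComponentMk w = c → GW.Reachable w ⟨w₀, hw₀W⟩) ∨
          ∃ w' : ↥Ws, GW.connectedComponentMk w' = c ∧ G.Adj x w'.val) := by
      intro c
      obtain ⟨r, hr⟩ := Quot.exists_rep c
      by_cases hreach : GW.Reachable r ⟨w₀, hw₀W⟩
      · have hk1 := hkey w₀ hw₀W
        have hne2 : ((G.neighborFinset w₀).filter (fun v => G.Adj u v)).Nonempty := by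
          rw [← Finset.card_pos]; omega
        obtain ⟨x, hx⟩ := hne2
        rw [Finset.mem_filter, SimpleGraph.mem_neighborFinset] at hx
        refine ⟨x, hx.2, hx.1, Or.inl (fun w hw => ?_)⟩
        have hww : GW.connectedComponentMk w = GW.connectedComponentMk r := hw.trans hr.symm
        exact (SimpleGraph.ConnectedComponent.eq.mp hww).trans hreach
      · have hrw : (r : V) ≠ w₀ := by
          intro h
          exact hreach (by rw [show r = (⟨w₀, hw₀W⟩ : ↥Ws) from Subtype.ext h])
        have hradj : ¬ G.Adj (r : V) w₀ := fun hadj =>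
          hreach (SimpleGraph.Adj.reachable (show GW.Adj r ⟨w₀, hw₀W⟩ from hadj))
        obtain ⟨x, hxr, hxw⟩ := common_neighbor G hrw hradj (hOre _ _ hrw hradj)
        have hxu : G.Adj u x := by
          by_contra hxu
          have hxne : x ≠ u := by
            rintro rfl
            exact ((hmemWs r).mp r.2).2 hxr.symm
          have hxW : x ∈ Ws := (hmemWs x).mpr ⟨hxne, hxu⟩
          exact hreach ((SimpleGraph.Adj.reachable (show GW.Adj r ⟨x, hxW⟩ from hxr)).trans
            (SimpleGraph.Adj.reachable (show GW.Adj ⟨x, hxW⟩ ⟨w₀, hw₀W⟩ from hxw.symm)))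
        exact ⟨x, hxu, hxw, Or.inr ⟨r, hr, hxr.symm⟩⟩
    set X : GW.ConnectedComponent → V := fun c => (hPx c).choose with hX
    have hXu : ∀ c, G.Adj u (X c) := fun c => (hPx c).choose_spec.1
    have hXw₀ : ∀ c, G.Adj w₀ (X c) := fun c => (hPx c).choose_spec.2.1
    have hXr : ∀ c, (∀ w : ↥Ws, GW.connectedComponentMk w = c → GW.Reachable w ⟨w₀, hw₀W⟩) ∨
        ∃ w' : ↥Ws, GW.connectedComponentMk w' = c ∧ G.Adj (X c) w'.val :=
      fun c => (hPx c).choose_spec.2.2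
    set X₀ : Finset V := Finset.univ.image X with hX₀
    have hX₀card : X₀.card ≤ k := by
      rw [hX₀, hk, ← Finset.card_univ (α := GW.ConnectedComponent)]
      exact Finset.card_image_le
    have hX₀adj : ∀ x ∈ X₀, G.Adj u x := by
      intro x hx
      obtain ⟨c, -, rfl⟩ := Finset.mem_image.mp hx
      exact hXu c
    set c₀ : GW.ConnectedComponent := GW.connectedComponentMk ⟨w₀, hw₀W⟩ with hc₀
    have hXc₀ : X c₀ ∈ X₀ := Finset.mem_image_of_mem X (Finset.mem_univ c₀)
    set D₁ : Set V := insert u {v | G.Adj u v ∧ v ∉ X₀} with hD₁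
    set D₂ : Set V := ↑X₀ ∪ Ws with hD₂
    have hXD₂ : ∀ c, X c ∈ D₂ := fun c =>
      Or.inl (Finset.mem_coe.mpr (Finset.mem_image_of_mem X (Finset.mem_univ c)))
    have hdisj : Disjoint D₁ D₂ := by
      rw [Set.disjoint_left]
      intro a ha hb
      rcases hb with hb | hb
      · have hadj := hX₀adj a (Finset.mem_coe.mp hb)
        rcases ha with rfl | ha
        · exact G.irrefl hadj
        · exact ha.2 (Finset.mem_coe.mp hb)
      · obtain ⟨hau, hanadj⟩ := (hmemWs a).mp hb
        rcases ha with rfl | ha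
        · exact hau rfl
        · exact hanadj ha.1
    -- domination of D₁
    have hdom1 : ∀ v ∉ D₁, ∃ w ∈ D₁, G.Adj v w := by
      intro v hv
      rw [hD₁, Set.mem_insert_iff] at hv
      push_neg at hv
      obtain ⟨hvu, hv2⟩ := hv
      by_cases hadj : G.Adj u v
      · exact ⟨u, Set.mem_insert u _, hadj.symm⟩
      · have hvW : v ∈ Ws := (hmemWs v).mpr ⟨hvu, hadj⟩
        have hk1 := hkey v hvW
        have hsd := Finset.card_sdiff_add_card
          ((G.neighborFinset v).filter (fun z => G.Adj u z)) X₀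
        have hsd2 : ((G.neighborFinset v).filter (fun z => G.Adj u z)).card ≤
            (((G.neighborFinset v).filter (fun z => G.Adj u z)) ∪ X₀).card :=
          Finset.card_le_card Finset.subset_union_left
        have hne3 : (((G.neighborFinset v).filter (fun z => G.Adj u z)) \ X₀).Nonempty := by
          rw [← Finset.card_pos]; omega
        obtain ⟨y, hy⟩ := hne3
        rw [Finset.mem_sdiff, Finset.mem_filter, SimpleGraph.mem_neighborFinset] at hy
        exact ⟨y, Or.inr ⟨hy.1.2, hy.2⟩, hy.1.1⟩
    -- domination of D₂
    have hdom2 : ∀ v ∉ D₂, ∃ w ∈ D₂, G.Adj v w := by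
      intro v hv
      rw [hD₂, Set.mem_union] at hv
      push_neg at hv
      obtain ⟨hvX, hvW⟩ := hv
      have hvX' : v ∉ X₀ := fun h => hvX (Finset.mem_coe.mpr h)
      rw [hmemWs v] at hvW
      push_neg at hvW
      by_cases hvu : v = u
      · subst hvu
        exact ⟨X c₀, hXD₂ c₀, hXu c₀⟩
      · have hadj : G.Adj u v := hvW hvu
        by_cases hnb : ∃ y ∈ Ws, G.Adj v y
        · obtain ⟨y, hyW, hyadj⟩ := hnb
          exact ⟨y, Or.inr hyW, hyadj⟩
        · push_neg at hnb
          have hsub : G.neighborFinset v ⊆ Finset.univ \ insert v WF := by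
            intro y hy
            rw [SimpleGraph.mem_neighborFinset] at hy
            rw [Finset.mem_sdiff, Finset.mem_insert]
            refine ⟨Finset.mem_univ _, ?_⟩
            push_neg
            refine ⟨fun h => G.irrefl (h ▸ hy), fun hyWF => hnb y (Finset.mem_coe.mpr hyWF) hy⟩
          have hvWF : v ∉ WF := by
            rw [hWF, Finset.mem_filter]
            push_neg
            intro _ _
            exact hadj
          have hins : (insert v WF).card = WF.card + 1 := Finset.card_insert_of_notMem hvWF
          have hcards := Finset.card_sdiff_add_card_eq_card (Finset.subset_univ (insert v WF))
          rw [Finset.card_univ] at hcards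
          have hdv : G.degree u ≤ G.degree v := humin v (Finset.mem_univ v)
          have hWFc : Fintype.card ↥Ws = WF.card := Fintype.card_coe WF
          have heq : G.neighborFinset v = Finset.univ \ insert v WF :=
            Finset.eq_of_subset_of_card_le hsub
              (by rw [G.card_neighborFinset_eq_degree]; omega)
          have hXin : X c₀ ∈ G.neighborFinset v := by
            rw [heq, Finset.mem_sdiff, Finset.mem_insert]
            refine ⟨Finset.mem_univ _, ?_⟩
            push_neg
            constructor
            · intro h; exact hvX' (h ▸ hXc₀)
            · rw [hWF, Finset.mem_filter]
              push_neg
              intro _ _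
              exact hXu c₀
          rw [SimpleGraph.mem_neighborFinset] at hXin
          exact ⟨X c₀, hXD₂ c₀, hXin⟩
    -- connectivity of D₁
    have hconn1 : (G.induce D₁).Connected := by
      apply hub_connected G D₁ u (Set.mem_insert u _)
      intro v hv
      rcases hv with rfl | hv
      · exact SimpleGraph.Reachable.refl _
      · exact SimpleGraph.Adj.reachable
          (show G.Adj v u from hv.1.symm)
    -- connectivity of D₂
    have hconn2 : (G.induce D₂).Connected := by
      have hw₀D₂ : w₀ ∈ D₂ := Or.inr hw₀W
      apply hub_connected G D₂ w₀ hw₀D₂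
      intro v hv
      have hedge : ∀ c, (G.induce D₂).Reachable ⟨X c, hXD₂ c⟩ ⟨w₀, hw₀D₂⟩ :=
        fun c => SimpleGraph.Adj.reachable (show G.Adj (X c) w₀ from (hXw₀ c).symm)
      rcases hv with hvX | hvW
      · obtain ⟨c, -, hc⟩ := Finset.mem_image.mp (Finset.mem_coe.mp hvX)
        subst hc
        exact hedge c
      · have hWD₂ : Ws ⊆ D₂ := fun z hz => Or.inr hz
        rcases hXr (GW.connectedComponentMk ⟨v, hvW⟩) with hall | ⟨w', hw'c, hadj⟩
        · exact reachable_induce_mono G hWD₂ (hall ⟨v, hvW⟩ rfl)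
        · have hR : GW.Reachable ⟨v, hvW⟩ w' :=
            SimpleGraph.ConnectedComponent.eq.mp hw'c.symm
          have h1 := reachable_induce_mono G hWD₂ hR
          have h2 : (G.induce D₂).Adj ⟨w'.val, hWD₂ w'.2⟩
              ⟨X (GW.connectedComponentMk ⟨v, hvW⟩), hXD₂ _⟩ := hadj.symm
          exact h1.trans ((SimpleGraph.Adj.reachable h2).trans (hedge _))
    exact ⟨D₁, D₂, hdisj, ⟨hconn1, hdom1⟩, ⟨hconn2, hdom2⟩⟩
  · push_neg at hW
    have hdegu : Finset.univ.erase u ⊆ G.neighborFinset u := by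
      intro v hv
      rw [SimpleGraph.mem_neighborFinset]
      exact hW v (Finset.mem_erase.mp hv).1
    have huniv : ∀ a : V, G.neighborFinset a = Finset.univ.erase a := by
      intro a
      have hsub : G.neighborFinset a ⊆ Finset.univ.erase a := by
        intro v hv
        rw [SimpleGraph.mem_neighborFinset] at hv
        exact Finset.mem_erase.mpr ⟨(G.ne_of_adj hv).symm, Finset.mem_univ _⟩
      refine Finset.eq_of_subset_of_card_le hsub ?_
      have h1 : (Finset.univ.erase u).card ≤ (G.neighborFinset u).card :=
        Finset.card_le_card hdegu
      have h2 : G.degree u ≤ G.degree a := humin a (Finset.mem_univ a)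
      rw [Finset.card_erase_of_mem (Finset.mem_univ a), G.card_neighborFinset_eq_degree]
      rw [Finset.card_erase_of_mem (Finset.mem_univ u), G.card_neighborFinset_eq_degree] at h1
      omega
    have hcomp : ∀ a b : V, a ≠ b → G.Adj a b := by
      intro a b hab
      rw [← SimpleGraph.mem_neighborFinset, huniv a]
      exact Finset.mem_erase.mpr ⟨Ne.symm hab, Finset.mem_univ _⟩
    obtain ⟨v, hvu⟩ := Fintype.exists_ne_of_one_lt_card (by omega) u
    refine ⟨{u}, {v}, ?_, ?_, ?_⟩
    · exact Set.disjoint_singleton.mpr (Ne.symm hvu)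
    · constructor
      · apply hub_connected G {u} u rfl
        intro w hw
        have hwu : w = u := hw
        subst hwu
        exact SimpleGraph.Reachable.refl _
      · intro w hw
        have hwu : w ≠ u := fun h => hw (by rw [h]; exact Set.mem_singleton u)
        exact ⟨u, Set.mem_singleton u, hcomp w u hwu⟩
    · constructor
      · apply hub_connected G {v} v rfl
        intro w hw
        have hwv : w = v := hw
        subst hwv
        exact SimpleGraph.Reachable.refl _
      · intro w hw
        have hwv : w ≠ v := fun h => hw (by rw [h]; exact Set.mem_singleton v)
        exact ⟨v, Set.mem_singleton v, hcomp w v hwv⟩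
end

section
/- Let G be a connected finite simple graph of order n ≥ 3, and suppose G contains k (0,j)-disjoint spanning trees T_1, …, T_k with k ≥ 2. Then |E(G)| + j ≥ k·(n − 1). -/
open SimpleGraph

variable {V : Type*}

/-!
Each of the `k` trees has `n - 1` edges. Since `n ≥ 3`, every edge of a spanning tree has an
endpoint that is inner in that tree; as no vertex is inner in two trees, each endpoint of an edge
is inner in at most one tree, so an edge lies in at most two of the trees. Counting tree edges
with multiplicity therefore gives `k (n - 1) ≤ |⋃ E(Tᵢ)| + #{edges shared by two trees}`, which is
at most `|E(G)| + j`.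
-/

open Finset

theorem Finset.sum_card_le_card_biUnion_add_card_filter {ι α : Type*} [DecidableEq α]
    (s : Finset ι) (F : ι → Finset α) (h : ∀ a, #{i ∈ s | a ∈ F i} ≤ 2) :
    ∑ i ∈ s, #(F i) ≤ #(s.biUnion F) + #{a ∈ s.biUnion F | 1 < #{i ∈ s | a ∈ F i}} := by
  have hF : ∀ i ∈ s, F i = {a ∈ s.biUnion F | a ∈ F i} := fun i hi ↦
    ((filter_mem_eq_inter (s := s.biUnion F) (t := F i)).trans
      (inter_eq_right.2 (subset_biUnion_of_mem F hi))).symm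
  calc ∑ i ∈ s, #(F i) = ∑ a ∈ s.biUnion F, #{i ∈ s | a ∈ F i} := by
        rw [sum_congr rfl fun i hi ↦ congrArg card (hF i hi)]
        simp_rw [card_eq_sum_ones, sum_filter]
        exact sum_comm
    _ ≤ ∑ a ∈ s.biUnion F, (1 + if 1 < #{i ∈ s | a ∈ F i} then 1 else 0) := by
        gcongr with a
        have := h a
        split_ifs <;> omega
    _ = #(s.biUnion F) + #{a ∈ s.biUnion F | 1 < #{i ∈ s | a ∈ F i}} := by
        rw [sum_add_distrib, card_filter, card_eq_sum_ones]

lemma eq_of_adj_of_adj_of_notMem_innerSet {T : SimpleGraph V} [T.LocallyFinite]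
    {u v w : V} (hu : u ∉ innerSet T) (huv : T.Adj u v) (huw : T.Adj u w) : w = v :=
  (Set.ncard_le_one_iff (Set.toFinite _)).1 (Nat.lt_succ_iff.1 (not_le.1 hu)) huw huv

lemma mem_innerSet_or_mem_innerSet_of_adj [Fintype V] {T : SimpleGraph V} (hT : T.Connected)
    (hV : 3 ≤ Fintype.card V) {u v : V} (huv : T.Adj u v) :
    u ∈ innerSet T ∨ v ∈ innerSet T := by
  classical
  obtain ⟨w, hw⟩ : ({u, v}ᶜ : Finset V).Nonempty := by
    rw [← card_pos, card_compl]
    have := card_le_two (a := u) (b := v)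
    omega
  by_contra! h
  obtain ⟨d, -, hd, hd'⟩ := (hT.preconnected u w).some.exists_boundary_dart
    (({u, v} : Finset V) : Set V) (by simp) (by simpa using hw)
  have hadj := d.adj
  simp only [coe_insert, coe_singleton, Set.mem_insert_iff, Set.mem_singleton_iff, not_or] at hd hd'
  rcases hd with hd | hd <;> rw [hd] at hadj
  · exact hd'.2 (eq_of_adj_of_adj_of_notMem_innerSet h.1 huv hadj)
  · exact hd'.1 (eq_of_adj_of_adj_of_notMem_innerSet h.2 huv.symm hadj)

section Multiplicity

variable {k : ℕ} {T : Fin k → SimpleGraph V}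

lemma subsingleton_setOf_mem_innerSet (hI : innerMulti T = ∅) (v : V) :
    {m | v ∈ innerSet (T m)}.Subsingleton := fun a ha b hb ↦ by
  by_contra hab
  exact (Set.eq_empty_iff_forall_notMem.1 hI) v ⟨a, b, hab, ha, hb⟩

lemma card_filter_mem_edgeFinset_le_two [Fintype V] [DecidableEq V]
    [∀ m, DecidableRel (T m).Adj] (hT : ∀ m, (T m).Connected) (hV : 3 ≤ Fintype.card V)
    (hI : innerMulti T = ∅) (e : Sym2 V) : #{m | e ∈ (T m).edgeFinset} ≤ 2 := by
  classical
  induction e using Sym2.ind with | h u v => ?_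
  have hinner (x : V) : #{m | x ∈ innerSet (T m)} ≤ 1 := card_le_one.2 fun a ha b hb ↦
    subsingleton_setOf_mem_innerSet hI x (by simpa using ha) (by simpa using hb)
  calc #{m | s(u, v) ∈ (T m).edgeFinset}
      ≤ #(({m | u ∈ innerSet (T m)} : Finset _) ∪ ({m | v ∈ innerSet (T m)} : Finset _)) :=
        card_le_card fun m hm ↦ by
        simp only [mem_filter, mem_univ, true_and, mem_edgeFinset, mem_edgeSet, mem_union] at hm ⊢
        exact mem_innerSet_or_mem_innerSet_of_adj (hT m) hV hm
    _ ≤ 1 + 1 := (card_union_le _ _).trans (add_le_add (hinner u) (hinner v))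

lemma mem_edgeMulti_of_one_lt_card [Fintype V] [DecidableEq V] [∀ m, DecidableRel (T m).Adj]
    {e : Sym2 V} (he : 1 < #{m | e ∈ (T m).edgeFinset}) : e ∈ edgeMulti T := by
  obtain ⟨a, ha, b, hb, hab⟩ := one_lt_card.1 he
  simp only [mem_filter, mem_univ, true_and, mem_edgeFinset] at ha hb
  exact ⟨a, b, hab, ha, hb⟩

end Multiplicity

theorem edge_lower_bound_zero_j_general [Fintype V] (G : SimpleGraph V)
    (hV : 3 ≤ Fintype.card V)
    (k j : ℕ) (T : Fin k → SimpleGraph V)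
    (hT : ∀ m, IsSpanningTree G (T m))
    (hI : innerMulti T = ∅) (hE : (edgeMulti T).ncard ≤ j) :
    k * (Fintype.card V - 1) ≤ G.edgeSet.ncard + j := by
  classical
  set F := fun m ↦ (T m).edgeFinset
  have hUnion : #(univ.biUnion F) ≤ G.edgeSet.ncard := by
    rw [← coe_edgeFinset, Set.ncard_coe_finset]
    exact card_le_card (biUnion_subset.2 fun m _ ↦ edgeFinset_mono (hT m).1)
  have hShared : #{e ∈ univ.biUnion F | 1 < #{m | e ∈ F m}} ≤ j := by
    rw [← Set.ncard_coe_finset]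
    refine (Set.ncard_le_ncard fun _ he ↦ ?_).trans hE
    exact mem_edgeMulti_of_one_lt_card (mem_filter.1 he).2
  calc k * (Fintype.card V - 1) = ∑ m, #(F m) := by
        rw [sum_const_nat fun m _ ↦ ?_, card_univ, Fintype.card_fin]
        exact Nat.eq_sub_of_add_eq (IsTree.mk (hT m).2.1 (hT m).2.2).card_edgeFinset
    _ ≤ #(univ.biUnion F) + #{e ∈ univ.biUnion F | 1 < #{m | e ∈ F m}} :=
        sum_card_le_card_biUnion_add_card_filter _ F
          (card_filter_mem_edgeFinset_le_two (fun m ↦ (hT m).2.1) hV hI)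
    _ ≤ G.edgeSet.ncard + j := add_le_add hUnion hShared

/-- A graph containing `k` (0,j)-disjoint spanning trees has at least
`k(n-1) - j` edges. -/
theorem edge_lower_bound_zero_j [Fintype V] (G : SimpleGraph V) (hG : G.Connected)
    (hV : 3 ≤ Fintype.card V)
    (k j : ℕ) (hk : 2 ≤ k) (T : Fin k → SimpleGraph V)
    (hT : ∀ m, IsSpanningTree G (T m))
    (hI : innerMulti T = ∅) (hE : (edgeMulti T).ncard ≤ j) :
    k * (Fintype.card V - 1) ≤ G.edgeSet.ncard + j :=
  edge_lower_bound_zero_j_general G hV k j T hT hI hE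
end

section
/- Let G be a connected finite simple graph with at least 2 vertices. Then the square G² of G contains two (0,1)-disjoint spanning trees. -/
open SimpleGraph

variable {V : Type*}

/-- The square of a graph: distinct vertices are adjacent iff their distance in `G`
is at most 2. -/
def squareGraph (G : SimpleGraph V) : SimpleGraph V where
  Adj u v := u ≠ v ∧ G.Reachable u v ∧ G.dist u v ≤ 2
  symm := by
    constructor
    rintro u v ⟨h1, h2, h3⟩
    exact ⟨h1.symm, h2.symm, by rwa [SimpleGraph.dist_comm]⟩
  loopless := by
    constructor
    rintro u ⟨h1, _⟩
    exact h1 rfl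

/-! ### Auxiliary theory: functional trees -/

/-- The functional tree determined by a parent function `f` and a root. -/
def funcTree (root : V) (f : V → V) : SimpleGraph V where
  Adj u v := u ≠ v ∧ ((u ≠ root ∧ f u = v) ∨ (v ≠ root ∧ f v = u))
  symm := by
    constructor
    rintro u v ⟨h1, h2⟩
    exact ⟨h1.symm, h2.symm⟩
  loopless := ⟨fun u h => h.1 rfl⟩

variable {root : V} {f : V → V} {m : V → ℕ}

lemma funcTree_adj {u v : V} :
    (funcTree root f).Adj u v ↔ u ≠ v ∧ ((u ≠ root ∧ f u = v) ∨ (v ≠ root ∧ f v = u)) :=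
  Iff.rfl

lemma funcTree_reachable (hm : ∀ v, v ≠ root → m (f v) < m v) (v : V) :
    (funcTree root f).Reachable root v := by
  have key : ∀ n v, m v ≤ n → (funcTree root f).Reachable root v := by
    intro n
    induction n with
    | zero =>
      intro v hv
      by_cases h : v = root
      · subst h; rfl
      · have := hm v h; omega
    | succ n ih =>
      intro v hv
      by_cases h : v = root
      · subst h; rfl
      · have hlt := hm v h
        have hadj : (funcTree root f).Adj v (f v) := by
          refine ⟨fun he => ?_, Or.inl ⟨h, rfl⟩⟩
          rw [← he] at hlt; omega
        exact (ih (f v) (by omega)).trans hadj.symm.reachable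
  exact key (m v) v le_rfl

lemma funcTree_connected (hm : ∀ v, v ≠ root → m (f v) < m v) :
    (funcTree root f).Connected :=
  (connected_iff_exists_forall_reachable _).mpr ⟨root, funcTree_reachable hm⟩

lemma funcTree_no_cycle (hm : ∀ v, v ≠ root → m (f v) < m v) {u : V}
    (c : (funcTree root f).Walk u u) (hc : c.IsCycle)
    (hmax : ∀ x ∈ c.support, m x ≤ m u) : False := by
  cases c with
  | nil => exact Walk.IsCycle.not_of_nil hc
  | cons h q =>
    rename_i x
    obtain ⟨y, rr, h2, hconcat⟩ := Walk.exists_cons_eq_concat h q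
    have hxs : x ∈ (Walk.cons h q).support := by
      rw [Walk.support_cons]
      exact List.mem_cons_of_mem _ q.start_mem_support
    have hys : y ∈ (Walk.cons h q).support := by
      rw [hconcat, Walk.concat_eq_append, Walk.mem_support_append_iff]
      exact Or.inl rr.end_mem_support
    have hfux : f u = x ∧ u ≠ root := by
      rcases h.2 with ⟨hur, hfu⟩ | ⟨hxr, hfx⟩
      · exact ⟨hfu, hur⟩
      · have := hm x hxr
        rw [hfx] at this
        exact absurd (hmax x hxs) (by omega)
    have hfuy : f u = y := by
      rcases h2.2 with ⟨hyr, hfy⟩ | ⟨hur, hfu⟩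
      · have := hm y hyr
        rw [hfy] at this
        exact absurd (hmax y hys) (by omega)
      · exact hfu
    have hxy : x = y := by rw [← hfux.1, hfuy]
    subst hxy
    have hnodup : (Walk.cons h q).edges.Nodup := hc.isCircuit.isTrail.edges_nodup
    have hlen : 3 ≤ (Walk.cons h q).length := hc.three_le_length
    have hlq : (Walk.cons h q).length = q.length + 1 := by simp
    have hlr : (Walk.cons h q).length = rr.length + 1 := by
      rw [hconcat, Walk.length_concat]
    have hrne : rr.edges ≠ [] := by
      intro hnil
      have := rr.length_edges
      rw [hnil] at this
      simp at this
      omega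
    obtain ⟨e0, es, hes⟩ := List.exists_cons_of_ne_nil hrne
    have hedges1 : (Walk.cons h q).edges = s(u, x) :: q.edges := Walk.edges_cons _ _
    have hedges2 : (Walk.cons h q).edges = rr.edges ++ [s(x, u)] := by
      rw [hconcat, Walk.edges_concat, List.concat_eq_append]
    have heq : s(u, x) :: q.edges = e0 :: (es ++ [s(x, u)]) := by
      rw [← hedges1, hedges2, hes]; rfl
    have hq_edges : q.edges = es ++ [s(x, u)] := (List.cons.injEq _ _ _ _ ▸ heq).2
    have hmem : s(u, x) ∈ q.edges := by
      rw [hq_edges, Sym2.eq_swap]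
      exact List.mem_append_right _ (List.mem_singleton_self _)
    rw [hedges1] at hnodup
    exact (List.nodup_cons.mp hnodup).1 hmem

lemma funcTree_acyclic (hm : ∀ v, v ≠ root → m (f v) < m v) :
    (funcTree root f).IsAcyclic := by
  classical
  intro a c hc
  rcases han : List.argmax m c.support with _ | u
  · exact c.support_ne_nil (List.argmax_eq_none.mp han)
  · have humem : u ∈ c.support := List.argmax_mem han
    have hmax : ∀ x ∈ c.support, m x ≤ m u := fun x hx => List.le_of_mem_argmax hx han
    refine funcTree_no_cycle hm (c.rotate u humem) (hc.rotate humem) ?_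
    intro x hx
    rw [Walk.support_eq_cons, List.mem_cons] at hx
    rcases hx with rfl | hx
    · exact hmax _ humem
    · have hperm := Walk.support_rotate c u humem
      have : x ∈ c.support.tail := hperm.mem_iff.mp hx
      exact hmax x (by rw [Walk.support_eq_cons c]; exact List.mem_cons_of_mem _ this)

lemma funcTree_edgeSet (hm : ∀ v, v ≠ root → m (f v) < m v) :
    (funcTree root f).edgeSet = {e | ∃ v, v ≠ root ∧ e = s(v, f v)} := by
  ext e
  induction e with
  | _ u v =>
    constructor
    · rintro ⟨hne, ⟨hur, hfu⟩ | ⟨hvr, hfv⟩⟩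
      · exact ⟨u, hur, by rw [hfu]⟩
      · exact ⟨v, hvr, by rw [hfv, Sym2.eq_swap]⟩
    · rintro ⟨w, hwr, he⟩
      have hne : f w ≠ w := fun hh => by have := hm w hwr; rw [hh] at this; omega
      have : (funcTree root f).Adj w (f w) := ⟨hne.symm, Or.inl ⟨hwr, rfl⟩⟩
      have hmem : s(w, f w) ∈ (funcTree root f).edgeSet := this
      rwa [← he] at hmem

lemma funcTree_inner (hm : ∀ v, v ≠ root → m (f v) < m v) :
    innerSet (funcTree root f) ⊆ {w | ∃ v, v ≠ root ∧ f v = w} := by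
  intro w hw
  by_contra hcon
  simp only [Set.mem_setOf_eq, not_exists, not_and] at hcon
  have hsub : (funcTree root f).neighborSet w ⊆ {f w} := by
    intro u hu
    rcases hu.2 with ⟨hwr, hfw⟩ | ⟨hur, hfu⟩
    · rw [Set.mem_singleton_iff, hfw]
    · exact absurd hfu (hcon u hur)
  have hle := Set.ncard_le_ncard hsub (Set.finite_singleton _)
  rw [Set.ncard_singleton] at hle
  have h2 : 2 ≤ ((funcTree root f).neighborSet w).ncard := hw
  omega

lemma funcTree_spanning (G : SimpleGraph V) (hG : G.Connected)
    (hm : ∀ v, v ≠ root → m (f v) < m v)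
    (hd : ∀ v, v ≠ root → G.dist v (f v) ≤ 2) :
    IsSpanningTree (squareGraph G) (funcTree root f) := by
  refine ⟨?_, funcTree_connected hm, funcTree_acyclic hm⟩
  intro u v huv
  rcases huv.2 with ⟨hur, hfu⟩ | ⟨hvr, hfv⟩
  · exact ⟨huv.1, hG u v, hfu ▸ hd u hur⟩
  · refine ⟨huv.1, hG u v, ?_⟩
    rw [SimpleGraph.dist_comm]
    exact hfv ▸ hd v hvr

/-- The square of any connected graph (on at least two vertices) contains two
(0,1)-disjoint spanning trees. -/
theorem square_two_zero_one_disjoint [Fintype V] (G : SimpleGraph V)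
    (hG : G.Connected) (hV : 2 ≤ Fintype.card V) :
    ∃ T₁ T₂ : SimpleGraph V,
      IsSpanningTree (squareGraph G) T₁ ∧ IsSpanningTree (squareGraph G) T₂ ∧
      Disjoint (innerSet T₁) (innerSet T₂) ∧
      (T₁.edgeSet ∩ T₂.edgeSet).ncard ≤ 1 := by
  classical
  have hneV : Nonempty V := Fintype.card_pos_iff.mp (by omega)
  obtain ⟨r⟩ := hneV
  -- a parent function along shortest paths to `r`
  have hpar : ∀ v : V, v ≠ r → ∃ w, G.Adj v w ∧ G.dist r w + 1 = G.dist r v := by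
    intro v hv
    obtain ⟨q, hq⟩ := (hG r v).exists_walk_length_eq_dist
    obtain ⟨w, hadj, q', hq'⟩ := Walk.exists_eq_cons_of_ne hv q.reverse
    refine ⟨w, hadj, ?_⟩
    have h1 : G.dist r w ≤ q'.length := by
      rw [SimpleGraph.dist_comm]; exact SimpleGraph.dist_le q'
    have h2 : q'.length + 1 = G.dist r v := by
      have hl := congrArg Walk.length hq'
      rw [Walk.length_reverse] at hl
      rw [Walk.length_cons] at hl
      omega
    have hwv : G.dist w v = 1 := SimpleGraph.dist_eq_one_iff_adj.mpr hadj.symm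
    have h3 : G.dist r v ≤ G.dist r w + G.dist w v := hG.dist_triangle
    omega
  let p : V → V := fun v => if h : v ≠ r then (hpar v h).choose else r
  have hp : ∀ v, v ≠ r → G.Adj v (p v) ∧ G.dist r (p v) + 1 = G.dist r v := by
    intro v hv
    simp only [p, dif_pos hv]
    exact (hpar v hv).choose_spec
  have hstep : ∀ v, v ≠ r → G.dist r (p v) + 1 = G.dist r v := fun v hv => (hp v hv).2
  have hadjp : ∀ v, v ≠ r → G.Adj v (p v) := fun v hv => (hp v hv).1
  have hd0 : ∀ v : V, G.dist r v = 0 ↔ v = r := by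
    intro v; rw [hG.dist_eq_zero_iff]; exact eq_comm
  have hpos : ∀ v, v ≠ r → 1 ≤ G.dist r v := by
    intro v hv
    have h0 : G.dist r v ≠ 0 := fun h => hv ((hd0 v).mp h)
    omega
  -- the double-step facts
  have hpp : ∀ v, v ≠ r → 2 ≤ G.dist r v →
      p v ≠ r ∧ G.dist r (p (p v)) + 2 = G.dist r v ∧ G.dist v (p (p v)) ≤ 2 := by
    intro v hv h2
    have h1 := hstep v hv
    have hpvr : p v ≠ r := by
      intro h
      rw [h] at h1
      rw [SimpleGraph.dist_self] at h1
      omega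
    have h1' := hstep (p v) hpvr
    refine ⟨hpvr, by omega, ?_⟩
    have t : G.dist v (p (p v)) ≤ G.dist v (p v) + G.dist (p v) (p (p v)) := hG.dist_triangle
    have e1 : G.dist v (p v) = 1 := SimpleGraph.dist_eq_one_iff_adj.mpr (hadjp v hv)
    have e2 : G.dist (p v) (p (p v)) = 1 := SimpleGraph.dist_eq_one_iff_adj.mpr (hadjp (p v) hpvr)
    omega
  -- a neighbor of the root
  obtain ⟨v0, hv0⟩ := Fintype.exists_ne_of_one_lt_card (by omega) r
  obtain ⟨y, hy, -, -⟩ := Walk.exists_eq_cons_of_ne (Ne.symm hv0) ((hG r v0).some)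
  have hdy : G.dist r y = 1 := SimpleGraph.dist_eq_one_iff_adj.mpr hy
  have hry : r ≠ y := hy.ne
  -- the two parent functions and the second measure
  set fA : V → V := fun v => if Even (G.dist r v) then p (p v) else p v with hfA
  set fB : V → V := fun v =>
    if v = r then y else
      if Even (G.dist r v) then p v else
        if G.dist r v = 1 then y else p (p v) with hfB
  set mB : V → ℕ := fun v => if v = y then 0 else if v = r then 1 else G.dist r v + 2
    with hmBdef
  have hfAe : ∀ v, Even (G.dist r v) → fA v = p (p v) := by
    intro v h; simp only [hfA]; rw [if_pos h]
  have hfAo : ∀ v, ¬ Even (G.dist r v) → fA v = p v := by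
    intro v h; simp only [hfA]; rw [if_neg h]
  have hfBr : fB r = y := by simp only [hfB]; simp
  have hfBe : ∀ v, v ≠ r → Even (G.dist r v) → fB v = p v := by
    intro v hv h; simp only [hfB]; rw [if_neg hv, if_pos h]
  have hfB1 : ∀ v, v ≠ r → ¬ Even (G.dist r v) → G.dist r v = 1 → fB v = y := by
    intro v hv h h1; simp only [hfB]; rw [if_neg hv, if_neg h, if_pos h1]
  have hfB3 : ∀ v, v ≠ r → ¬ Even (G.dist r v) → G.dist r v ≠ 1 → fB v = p (p v) := by
    intro v hv h h1; simp only [hfB]; rw [if_neg hv, if_neg h, if_neg h1]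
  have hmBy : mB y = 0 := by simp only [hmBdef]; simp
  have hmBr : mB r = 1 := by simp only [hmBdef]; simp [hry]
  have hmBo : ∀ v, v ≠ y → v ≠ r → mB v = G.dist r v + 2 := by
    intro v hv hvr; simp only [hmBdef]; rw [if_neg hv, if_neg hvr]
  have hmB_ub : ∀ v, v ≠ r → mB v ≤ G.dist r v + 2 := by
    intro v hvr
    by_cases hv : v = y
    · subst hv; rw [hmBy]; omega
    · rw [hmBo v hv hvr]
  -- decreasing measures
  have hmA : ∀ v, v ≠ r → G.dist r (fA v) < G.dist r v := by
    intro v hv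
    by_cases he : Even (G.dist r v)
    · have h2 : 2 ≤ G.dist r v := by
        have := hpos v hv
        rw [Nat.even_iff] at he
        omega
      rw [hfAe v he]
      have := (hpp v hv h2).2.1
      omega
    · rw [hfAo v he]
      have := hstep v hv
      omega
  have hmB : ∀ v, v ≠ y → mB (fB v) < mB v := by
    intro v hv
    by_cases hvr : v = r
    · subst hvr
      rw [hfBr, hmBy, hmBr]
      omega
    · have hposv := hpos v hvr
      have hv2 : mB v = G.dist r v + 2 := hmBo v hv hvr
      by_cases he : Even (G.dist r v)
      · have h2 : 2 ≤ G.dist r v := by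
          rw [Nat.even_iff] at he
          omega
        rw [hfBe v hvr he]
        have hpvr : p v ≠ r := (hpp v hvr h2).1
        have h1 := hstep v hvr
        have := hmB_ub (p v) hpvr
        omega
      · by_cases h1' : G.dist r v = 1
        · rw [hfB1 v hvr he h1', hmBy]
          omega
        · rw [hfB3 v hvr he h1']
          have h3 : 3 ≤ G.dist r v := by
            rw [Nat.even_iff] at he
            omega
          obtain ⟨hpvr, heq, -⟩ := hpp v hvr (by omega)
          have hppr : p (p v) ≠ r := by
            intro h
            rw [h] at heq
            rw [SimpleGraph.dist_self] at heq
            omega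
          have := hmB_ub _ hppr
          omega
  -- parity of images
  have hAeven : ∀ v, v ≠ r → Even (G.dist r (fA v)) := by
    intro v hv
    by_cases he : Even (G.dist r v)
    · have h2 : 2 ≤ G.dist r v := by
        have := hpos v hv
        rw [Nat.even_iff] at he
        omega
      rw [hfAe v he]
      have := (hpp v hv h2).2.1
      rw [Nat.even_iff] at he ⊢
      omega
    · rw [hfAo v he]
      have := hstep v hv
      rw [Nat.even_iff] at he ⊢
      omega
  have hBodd : ∀ v, v ≠ y → ¬ Even (G.dist r (fB v)) := by
    intro v hv
    by_cases hvr : v = r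
    · subst hvr
      rw [hfBr, hdy, Nat.even_iff]
      omega
    · by_cases he : Even (G.dist r v)
      · rw [hfBe v hvr he]
        have := hstep v hvr
        rw [Nat.even_iff] at he ⊢
        omega
      · by_cases h1' : G.dist r v = 1
        · rw [hfB1 v hvr he h1', hdy, Nat.even_iff]
          omega
        · rw [hfB3 v hvr he h1']
          have h3 : 3 ≤ G.dist r v := by
            have := hpos v hvr
            rw [Nat.even_iff] at he
            omega
          obtain ⟨-, heq, -⟩ := hpp v hvr (by omega)
          rw [Nat.even_iff] at he ⊢
          omega
  -- distance bounds
  have hA2 : ∀ v, v ≠ r → G.dist v (fA v) ≤ 2 := by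
    intro v hv
    by_cases he : Even (G.dist r v)
    · have h2 : 2 ≤ G.dist r v := by
        have := hpos v hv
        rw [Nat.even_iff] at he
        omega
      rw [hfAe v he]
      exact (hpp v hv h2).2.2
    · rw [hfAo v he]
      have : G.dist v (p v) = 1 := SimpleGraph.dist_eq_one_iff_adj.mpr (hadjp v hv)
      omega
  have hB2 : ∀ v, v ≠ y → G.dist v (fB v) ≤ 2 := by
    intro v hv
    by_cases hvr : v = r
    · subst hvr
      rw [hfBr]
      omega
    · by_cases he : Even (G.dist r v)
      · rw [hfBe v hvr he]
        have : G.dist v (p v) = 1 := SimpleGraph.dist_eq_one_iff_adj.mpr (hadjp v hvr)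
        omega
      · by_cases h1' : G.dist r v = 1
        · rw [hfB1 v hvr he h1']
          have ht : G.dist v y ≤ G.dist v r + G.dist r y := hG.dist_triangle
          have : G.dist v r = 1 := by rw [SimpleGraph.dist_comm]; exact h1'
          omega
        · rw [hfB3 v hvr he h1']
          have h3 : 3 ≤ G.dist r v := by
            have := hpos v hvr
            rw [Nat.even_iff] at he
            omega
          exact (hpp v hvr (by omega)).2.2
  -- assemble
  refine ⟨funcTree r fA, funcTree y fB,
    funcTree_spanning (m := fun v => G.dist r v) G hG hmA hA2,
    funcTree_spanning (m := mB) G hG hmB hB2, ?_, ?_⟩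
  · rw [Set.disjoint_left]
    intro w hwA hwB
    obtain ⟨v1, hv1, he1⟩ := funcTree_inner (m := fun v => G.dist r v) hmA hwA
    obtain ⟨v2, hv2, he2⟩ := funcTree_inner (m := mB) hmB hwB
    have hA := hAeven v1 hv1
    have hB := hBodd v2 hv2
    rw [he1] at hA
    rw [he2] at hB
    exact hB hA
  · have hinter : (funcTree r fA).edgeSet ∩ (funcTree y fB).edgeSet = {s(y, r)} := by
      apply Set.Subset.antisymm
      · rintro e ⟨heA, heB⟩
        rw [funcTree_edgeSet (m := fun v => G.dist r v) hmA] at heA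
        rw [funcTree_edgeSet (m := mB) hmB] at heB
        obtain ⟨v, hv, rfl⟩ := heA
        obtain ⟨w, hw, he⟩ := heB
        rw [Sym2.eq_iff] at he
        rcases he with ⟨rfl, he⟩ | ⟨hv2, hw2⟩
        · exfalso
          have h1 := hAeven v hv
          have h2 := hBodd v hw
          rw [he] at h1
          exact h2 h1
        · by_cases hwr : w = r
          · subst hwr
            have hvy : v = y := by rw [hv2, hfBr]
            rw [Set.mem_singleton_iff, hw2, hvy]
          · exfalso
            have h1 : G.dist r w < G.dist r v := by
              rw [← hw2]
              exact hmA v hv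
            by_cases hee : Even (G.dist r w)
            · have := hstep w hwr
              rw [hfBe w hwr hee] at hv2
              rw [hv2] at h1
              omega
            · by_cases h1' : G.dist r w = 1
              · rw [hfB1 w hwr hee h1'] at hv2
                have hdv : G.dist r v = 1 := by rw [hv2]; exact hdy
                have h0 : G.dist r w = 0 := by omega
                exact hwr ((hd0 w).mp h0)
              · rw [hfB3 w hwr hee h1'] at hv2
                have h3 : 3 ≤ G.dist r w := by
                  have := hpos w hwr
                  rw [Nat.even_iff] at hee
                  omega
                obtain ⟨-, heq, -⟩ := hpp w hwr (by omega)
                rw [hv2] at h1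
                omega
      · rintro e he
        rw [Set.mem_singleton_iff] at he
        subst he
        constructor
        · rw [funcTree_edgeSet (m := fun v => G.dist r v) hmA]
          refine ⟨y, hry.symm, ?_⟩
          have hye : ¬ Even (G.dist r y) := by
            rw [hdy, Nat.even_iff]
            omega
          rw [hfAo y hye]
          have := hstep y hry.symm
          rw [hdy] at this
          have h0 : G.dist r (p y) = 0 := by omega
          rw [(hd0 _).mp h0]
        · rw [funcTree_edgeSet (m := mB) hmB]
          exact ⟨r, hry, by rw [hfBr, Sym2.eq_swap]⟩
    rw [hinter, Set.ncard_singleton]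
end

section
/- Let k ≥ 2 be an integer and let G be a k-connected interval graph. Then G contains k pairwise disjoint connected dominating sets. -/
open SimpleGraph

variable {V : Type*}

/-- `G` is an interval graph: vertices can be assigned nonempty closed real intervals
so that distinct vertices are adjacent iff their intervals intersect. -/
def IsIntervalGraph (G : SimpleGraph V) : Prop :=
  ∃ a b : V → ℝ, (∀ v, a v ≤ b v) ∧
    ∀ u v : V, u ≠ v → (G.Adj u v ↔ (a u ≤ b v ∧ a v ≤ b u))

/-- `G` is `k`-connected: it has at least `k + 1` vertices and removing any set of at
most `k - 1` vertices leaves a connected graph. -/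
def IsKConnected [Fintype V] (G : SimpleGraph V) (k : ℕ) : Prop :=
  k + 1 ≤ Fintype.card V ∧
  ∀ A : Set V, A.ncard ≤ k - 1 → (G.induce (Aᶜ : Set V)).Connected


/-!
Take an interval model of `G`, let `L` be the least right endpoint and `R` the greatest left
endpoint. If `R ≤ L`, every interval contains `[R, L]`, so `G` is complete and any `k` vertices
are `k` disjoint connected dominating singletons. Otherwise every point of `(L, R)` lies in at
least `k` intervals: the intervals through it separate the one ending at `L` from the one
starting at `R`. Sweeping from left to right and always giving the next interval to the class
that reaches least far colours `V` with `k` classes, each of which covers `[L, R]`. Since every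
interval meets `[L, R]`, such a class dominates `G`, and its intersection graph is connected
because the union of its intervals is.
-/

open Set

section IntersectionGraph

variable {X : Type*} [TopologicalSpace X] {G : SimpleGraph V} {I : V → Set X}

/-- If the graph were split, the sets of the two sides would have disjoint closed unions
separating `⋃ v ∈ D, I v`. -/
theorem SimpleGraph.induce_preconnected_of_isPreconnected_biUnion
    (hclosed : ∀ v, IsClosed (I v)) (hne : ∀ v, (I v).Nonempty)
    (hadj : ∀ u v, u ≠ v → (I u ∩ I v).Nonempty → G.Adj u v) {D : Set V} (hD : D.Finite)
    (hU : IsPreconnected (⋃ v ∈ D, I v)) : (G.induce D).Preconnected := by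
  rintro ⟨u, hu⟩ ⟨w, hw⟩
  set S := {v | ∃ hv : v ∈ D, (G.induce D).Reachable ⟨u, hu⟩ ⟨v, hv⟩}
  have hu_S : u ∈ S := ⟨hu, .rfl⟩
  have hS_closed : ∀ v ∈ S, ∀ v' ∈ D, (I v ∩ I v').Nonempty → v' ∈ S := by
    rintro v ⟨hv, hreach⟩ v' hv' hmeet
    obtain rfl | hne := eq_or_ne v v'
    · exact ⟨hv, hreach⟩
    · exact ⟨hv', hreach.trans (SimpleGraph.Adj.reachable (G := G.induce D)
        (u := ⟨v, hv⟩) (v := ⟨v', hv'⟩) (hadj v v' hne hmeet))⟩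
  by_contra hw_S
  replace hw_S : w ∉ S := fun h => hw_S h.2
  have hsplit := isPreconnected_iff_subset_of_disjoint_closed.mp hU
    (⋃ v ∈ D ∩ S, I v) (⋃ v ∈ D \ S, I v)
    ((hD.subset inter_subset_left).isClosed_biUnion fun v _ => hclosed v)
    ((hD.subset sdiff_subset).isClosed_biUnion fun v _ => hclosed v) ?_ ?_
  · rcases hsplit with hA | hB
    · obtain ⟨x, hx⟩ := hne w
      obtain ⟨v, ⟨-, hv⟩, hxv⟩ := mem_iUnion₂.mp (hA (mem_biUnion hw hx))
      exact hw_S (hS_closed v hv w hw ⟨x, hxv, hx⟩)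
    · obtain ⟨x, hx⟩ := hne u
      obtain ⟨v, ⟨hv, hv_S⟩, hxv⟩ := mem_iUnion₂.mp (hB (mem_biUnion hu hx))
      exact hv_S (hS_closed u hu_S v hv ⟨x, hx, hxv⟩)
  · intro x hx
    obtain ⟨v, hv, hxv⟩ := mem_iUnion₂.mp hx
    by_cases hv_S : v ∈ S
    · exact Or.inl (mem_biUnion ⟨hv, hv_S⟩ hxv)
    · exact Or.inr (mem_biUnion ⟨hv, hv_S⟩ hxv)
  · refine eq_empty_of_forall_notMem fun x ⟨_, hxA, hxB⟩ => ?_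
    obtain ⟨v, ⟨-, hv_S⟩, hxv⟩ := mem_iUnion₂.mp hxA
    obtain ⟨v', ⟨hv', hv'_S⟩, hxv'⟩ := mem_iUnion₂.mp hxB
    exact hv'_S (hS_closed v hv_S v' hv' ⟨x, hxv, hxv'⟩)

/-- Every set meets `J`, so each `J ∪ I v` is preconnected and they all contain `J`. -/
theorem isConnDomSet_of_subset_biUnion {J : Set X} (hJ : IsPreconnected J) (hJne : J.Nonempty)
    (hclosed : ∀ v, IsClosed (I v)) (hpre : ∀ v, IsPreconnected (I v))
    (hmeet : ∀ v, (I v ∩ J).Nonempty)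
    (hadj : ∀ u v, u ≠ v → (I u ∩ I v).Nonempty → G.Adj u v) {D : Set V} (hD : D.Finite)
    (hcover : J ⊆ ⋃ v ∈ D, I v) : IsConnDomSet G D := by
  obtain ⟨x, hx⟩ := hJne
  obtain ⟨v₀, hv₀, -⟩ := mem_iUnion₂.mp (hcover hx)
  have : Nonempty D := ⟨⟨v₀, hv₀⟩⟩
  have hU : ⋃ v ∈ D, I v = ⋃ v : D, (I v ∪ J) := by
    rw [← iUnion_union, biUnion_eq_iUnion]
    exact (union_eq_left.mpr (biUnion_eq_iUnion D (fun v _ => I v) ▸ hcover)).symm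
  refine ⟨⟨?_⟩, fun v hv => ?_⟩
  · refine SimpleGraph.induce_preconnected_of_isPreconnected_biUnion hclosed
      (fun v => (hmeet v).mono inter_subset_left) hadj hD ?_
    rw [hU]
    exact isPreconnected_iUnion ⟨x, mem_iInter.mpr fun v => Or.inr hx⟩
      fun v => (hpre v).union' (hmeet v) hJ
  · obtain ⟨y, hyv, hyJ⟩ := hmeet v
    obtain ⟨w, hw, hyw⟩ := mem_iUnion₂.mp (hcover hyJ)
    exact ⟨w, hw, hadj v w (fun h => hv (h ▸ hw)) ⟨y, hyv, hyw⟩⟩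

end IntersectionGraph

theorem Set.Icc_inter_Icc_nonempty_iff {α : Type*} [LinearOrder α] {a₁ b₁ a₂ b₂ : α}
    (h₁ : a₁ ≤ b₁) (h₂ : a₂ ≤ b₂) :
    (Icc a₁ b₁ ∩ Icc a₂ b₂).Nonempty ↔ a₁ ≤ b₂ ∧ a₂ ≤ b₁ := by
  rw [Icc_inter_Icc, nonempty_Icc, sup_le_iff, le_inf_iff, le_inf_iff]
  tauto

section IntervalGraph

variable {G : SimpleGraph V} {a b : V → ℝ}

theorem Icc_inter_Icc_nonempty_iff_adj (hab : ∀ v, a v ≤ b v)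
    (hadj : ∀ u v, u ≠ v → (G.Adj u v ↔ (a u ≤ b v ∧ a v ≤ b u))) {u v : V} (huv : u ≠ v) :
    (Icc (a u) (b u) ∩ Icc (a v) (b v)).Nonempty ↔ G.Adj u v := by
  rw [Icc_inter_Icc_nonempty_iff (hab u) (hab v), hadj u v huv]

theorem isConnDomSet_of_Icc_subset_biUnion [Finite V] (hab : ∀ v, a v ≤ b v)
    (hadj : ∀ u v, u ≠ v → (G.Adj u v ↔ (a u ≤ b v ∧ a v ≤ b u)))
    {L R : ℝ} (hLR : L ≤ R) (hmeet : ∀ v, a v ≤ R ∧ L ≤ b v) {D : Set V}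
    (hcover : Icc L R ⊆ ⋃ v ∈ D, Icc (a v) (b v)) : IsConnDomSet G D :=
  isConnDomSet_of_subset_biUnion isPreconnected_Icc (nonempty_Icc.mpr hLR)
    (fun _ => isClosed_Icc) (fun _ => isPreconnected_Icc)
    (fun v => ⟨max L (a v), ⟨le_max_right _ _, max_le (hmeet v).2 (hab v)⟩,
      ⟨le_max_left _ _, max_le hLR (hmeet v).1⟩⟩)
    (fun _ _ huv => (Icc_inter_Icc_nonempty_iff_adj hab hadj huv).mp) D.toFinite hcover

/-- Removing the intervals through `p` would separate an interval left of `p` from one right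
of `p`: walking in the rest never crosses `p`. -/
theorem le_ncard_setOf_mem_Icc_of_isKConnected [Fintype V] {k : ℕ} (hab : ∀ v, a v ≤ b v)
    (hadj : ∀ u v, u ≠ v → (G.Adj u v ↔ (a u ≤ b v ∧ a v ≤ b u)))
    (hconn : IsKConnected G k) {u w : V} {p : ℝ} (hu : b u < p) (hw : p < a w) :
    k ≤ {v | p ∈ Icc (a v) (b v)}.ncard := by
  by_contra! hlt
  set A := {v | p ∈ Icc (a v) (b v)}
  have hu_A : u ∉ A := fun h => h.2.not_gt hu
  have hw_A : w ∉ A := fun h => h.1.not_gt hw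
  have hleft : ∀ x y : ↥Aᶜ, (G.induce Aᶜ).Adj x y → b x < p → b y < p := by
    intro ⟨x, _⟩ ⟨y, hy⟩ (hxy : G.Adj x y) hbx
    obtain ⟨z, ⟨-, hzx⟩, hyz, -⟩ := (Icc_inter_Icc_nonempty_iff_adj hab hadj hxy.ne).mpr hxy
    by_contra! hpy
    exact hy ⟨by linarith, hpy⟩
  have hbw : ∀ y, Relation.ReflTransGen (G.induce Aᶜ).Adj ⟨u, hu_A⟩ y → b y < p := by
    intro y hy
    induction hy with
    | refl => exact hu
    | tail _ hyz ih => exact hleft _ _ hyz ih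
  have hreach := (hconn.2 A (by omega)).preconnected ⟨u, hu_A⟩ ⟨w, hw_A⟩
  linarith [hab w, hbw _ (SimpleGraph.reachable_iff_reflTransGen _ _ |>.mp hreach)]

end IntervalGraph

section Sweep

variable {a b : V → ℝ} {L R : ℝ} {k : ℕ} [NeZero k]

/-- A state of the greedy sweep that colours the intervals by increasing left endpoint, giving
each one to a class of least reach `r`. -/
structure IsSweepState (a b : V → ℝ) (L : ℝ) (s : Finset V) (c : V → Fin k) (r : Fin k → ℝ) :
    Prop where
  le_reach : ∀ v ∈ s, b v ≤ r (c v)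
  covers : ∀ i q, L ≤ q → q ≤ r i → ∃ v ∈ s, c v = i ∧ q ∈ Icc (a v) (b v)
  injOn : ∀ v ∈ s, ∀ w ∈ s, c v = c w → ⨅ i, r i < b v → ⨅ i, r i < b w → v = w

namespace IsSweepState

variable {s : Finset V} {c : V → Fin k} {r : Fin k → ℝ}

/-- The colour map is injective on `T` and misses a class of least reach. -/
theorem ncard_lt (h : IsSweepState a b L s c r) {T : Set V} (hTs : T ⊆ s)
    (hT : ∀ v ∈ T, ⨅ i, r i < b v) : T.ncard < k := by
  obtain ⟨j, hj⟩ := exists_eq_ciInf_of_finite (f := r)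
  have hmaps : ∀ v ∈ T, c v ∈ ({j}ᶜ : Set (Fin k)) := by
    rintro v hv (hvj : c v = j)
    have := h.le_reach v (hTs hv)
    rw [hvj, hj] at this
    exact this.not_gt (hT v hv)
  calc T.ncard ≤ ({j}ᶜ : Set (Fin k)).ncard :=
        ncard_le_ncard_of_injOn c hmaps fun v hv w hw hvw =>
          h.injOn v (hTs hv) w (hTs hw) hvw (hT v hv) (hT w hw)
    _ < k := by
        rw [ncard_compl, ncard_singleton, Nat.card_eq_fintype_card, Fintype.card_fin]
        exact Nat.sub_lt (NeZero.pos k) one_pos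

/-- At a point `q` beyond the sweep every interval through `q` is already coloured, with
right end above the least reach; there are at least `k` of them, too many for `ncard_lt`. -/
theorem le_max_iInf (h : IsSweepState a b L s c r)
    (hmul : ∀ q ∈ Ioo L R, k ≤ {v | q ∈ Icc (a v) (b v)}.ncard) {t : ℝ} (htR : t ≤ R)
    (hs : ∀ v, a v < t → v ∈ s) : t ≤ max (⨅ i, r i) L := by
  by_contra! hlt
  obtain ⟨q, hq_gt, hq_lt⟩ := exists_between hlt
  refine (hmul q ⟨(le_max_right _ _).trans_lt hq_gt, hq_lt.trans_le htR⟩).not_gt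
    (h.ncard_lt (fun v hv => hs v (hv.1.trans_lt hq_lt)) fun v hv => ?_)
  exact (le_max_left _ _).trans_lt (hq_gt.trans_le hv.2)

theorem exists_insert [DecidableEq V] (h : IsSweepState a b L s c r) {x : V} (hx : x ∉ s)
    (hax : a x ≤ max (⨅ i, r i) L) :
    ∃ (c' : V → Fin k) (r' : Fin k → ℝ), IsSweepState a b L (insert x s) c' r' := by
  obtain ⟨j, hj⟩ := exists_eq_ciInf_of_finite (f := r)
  set r' := Function.update r j (max (r j) (b x))
  set c' := Function.update c x j
  have hrr' : ∀ i, r i ≤ r' i := fun i => by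
    rcases eq_or_ne i j with rfl | hij <;> simp [r', *]
  have hm : ⨅ i, r i ≤ ⨅ i, r' i := Finite.ciInf_mono hrr'
  have hc' : ∀ v ∈ s, c' v = c v := fun v hv =>
    Function.update_of_ne (ne_of_mem_of_not_mem hv hx) _ _
  have hold : ∀ v ∈ insert x s, v ≠ x → v ∈ s := fun _ => Finset.mem_of_mem_insert_of_ne
  have hnew : ∀ v ∈ insert x s, v ≠ x → c' v = j → ¬ ⨅ i, r' i < b v :=
    fun v hv hvx hvj hlt => by
      have := h.le_reach v (hold v hv hvx)
      rw [← hc' v (hold v hv hvx), hvj, hj] at this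
      exact (hm.trans_lt hlt).not_ge this
  refine ⟨c', r', ⟨fun v hv => ?_, fun i q hLq hqr => ?_, fun v hv w hw hvw hbv hbw => ?_⟩⟩
  · rcases eq_or_ne v x with rfl | hvx
    · simp [c', r']
    · rw [hc' v (hold v hv hvx)]
      exact (h.le_reach v (hold v hv hvx)).trans (hrr' _)
  · rcases le_or_gt q (r i) with hq | hq
    · obtain ⟨v, hv, hcv, hqv⟩ := h.covers i q hLq hq
      exact ⟨v, Finset.mem_insert_of_mem hv, (hc' v hv).trans hcv, hqv⟩
    · obtain rfl : i = j := by
        by_contra hij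
        simp only [r', Function.update_of_ne hij] at hqr
        exact hq.not_ge hqr
      refine ⟨x, Finset.mem_insert_self _ _, Function.update_self .., ?_, ?_⟩
      · exact hax.trans (max_le (hj ▸ hq.le) hLq)
      · simp only [r', Function.update_self] at hqr
        exact (le_max_iff.mp hqr).resolve_left hq.not_ge
  · have hx_j : c' x = j := Function.update_self ..
    rcases eq_or_ne v x with hvx | hvx <;> rcases eq_or_ne w x with hwx | hwx
    · exact hvx.trans hwx.symm
    · subst hvx
      exact (hnew w hw hwx (hvw.symm.trans hx_j) hbw).elim
    · subst hwx
      exact (hnew v hv hvx (hvw.trans hx_j) hbv).elim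
    · rw [hc' v (hold v hv hvx), hc' w (hold w hw hwx)] at hvw
      exact h.injOn v (hold v hv hvx) w (hold w hw hwx) hvw (hm.trans_lt hbv) (hm.trans_lt hbw)

end IsSweepState

theorem exists_isSweepState_univ [Fintype V]
    (hmul : ∀ q ∈ Ioo L R, k ≤ {v | q ∈ Icc (a v) (b v)}.ncard) (haR : ∀ v, a v ≤ R) :
    ∃ (c : V → Fin k) (r : Fin k → ℝ), IsSweepState a b L Finset.univ c r := by
  classical
  suffices ∀ s : Finset V, (∀ v ∈ s, ∀ w, a w < a v → w ∈ s) →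
      ∃ (c : V → Fin k) (r : Fin k → ℝ), IsSweepState a b L s c r from
    this _ fun _ _ w _ => Finset.mem_univ w
  intro s
  induction s using Finset.induction_on_max_value a with
  | empty =>
    exact fun _ => ⟨fun _ => 0, fun _ => L - 1, ⟨by simp, fun _ q hLq hq => by linarith, by simp⟩⟩
  | insert x s hx hmax ih =>
    intro hclosed
    have hs : ∀ v, a v < a x → v ∈ s := fun v hv =>
      (Finset.mem_insert.mp (hclosed x (Finset.mem_insert_self _ _) v hv)).resolve_left
        (by rintro rfl; exact hv.false)
    obtain ⟨c, r, h⟩ := ih fun v hv w hw =>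
      hs w (hw.trans_le (hmax v hv))
    exact h.exists_insert hx (h.le_max_iInf hmul (haR x) hs)

theorem exists_forall_Icc_subset_biUnion_preimage [Fintype V] (hLR : L < R)
    (hmul : ∀ q ∈ Ioo L R, k ≤ {v | q ∈ Icc (a v) (b v)}.ncard) (haR : ∀ v, a v ≤ R) :
    ∃ c : V → Fin k, ∀ i, Icc L R ⊆ ⋃ v ∈ c ⁻¹' {i}, Icc (a v) (b v) := by
  obtain ⟨c, r, h⟩ := exists_isSweepState_univ hmul haR
  have hR : R ≤ ⨅ i, r i :=
    (le_max_iff.mp (h.le_max_iInf hmul le_rfl fun v _ => Finset.mem_univ v)).resolve_right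
      hLR.not_ge
  refine ⟨c, fun i q hq => ?_⟩
  obtain ⟨v, -, hcv, hqv⟩ := h.covers i q hq.1 (hq.2.trans (hR.trans (Finite.ciInf_le r i)))
  exact mem_biUnion hcv hqv

end Sweep

theorem interval_kconnected_disjoint_cds_general [Fintype V] (G : SimpleGraph V)
    (k : ℕ) (hint : IsIntervalGraph G) (hconn : IsKConnected G k) :
    ∃ D : Fin k → Set V, (∀ i, IsConnDomSet G (D i)) ∧
      ∀ i j : Fin k, i ≠ j → Disjoint (D i) (D j) := by
  obtain rfl | hk := Nat.eq_zero_or_pos k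
  · exact ⟨Fin.elim0, fun i => i.elim0, fun i => i.elim0⟩
  have : NeZero k := ⟨hk.ne'⟩
  obtain ⟨a, b, hab, hadj⟩ := hint
  have hcard := hconn.1
  have : Nonempty V := Fintype.card_pos_iff.mp (by omega)
  obtain ⟨u, hu⟩ := Finite.exists_min b
  obtain ⟨w, hw⟩ := Finite.exists_max a
  rcases lt_or_ge (b u) (a w) with hlt | hle
  · obtain ⟨c, hc⟩ := exists_forall_Icc_subset_biUnion_preimage hlt
      (fun q hq => le_ncard_setOf_mem_Icc_of_isKConnected hab hadj hconn hq.1 hq.2) hw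
    exact ⟨fun i => c ⁻¹' {i},
      fun i => isConnDomSet_of_Icc_subset_biUnion hab hadj hlt.le (fun v => ⟨hw v, hu v⟩) (hc i),
      fun i j hij => (disjoint_singleton.mpr hij).preimage c⟩
  · obtain ⟨σ⟩ := Function.Embedding.nonempty_of_card_le (α := Fin k) (β := V)
      (by rw [Fintype.card_fin]; omega)
    refine ⟨fun i => {σ i}, fun i => isConnDomSet_of_Icc_subset_biUnion hab hadj hle
      (fun v => ⟨(hw v).trans hle, hle.trans (hu v)⟩) ?_,
      fun i j hij => disjoint_singleton.mpr (σ.injective.ne hij)⟩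
    rw [biUnion_singleton]
    exact Icc_subset_Icc (hw _) (hu _)

/-- Every `k`-connected interval graph (k ≥ 2) contains `k` pairwise disjoint
connected dominating sets. -/
theorem interval_kconnected_disjoint_cds [Fintype V] (G : SimpleGraph V)
    (k : ℕ) (hk : 2 ≤ k) (hint : IsIntervalGraph G) (hconn : IsKConnected G k) :
    ∃ D : Fin k → Set V, (∀ i, IsConnDomSet G (D i)) ∧
      ∀ i j : Fin k, i ≠ j → Disjoint (D i) (D j) :=
  interval_kconnected_disjoint_cds_general G k hint hconn
end

section
/- Let n ≥ 3 and ℓ ≥ 0 be integers, and define m = ⌊n/2⌋ + min(M, ⌈n/2⌉), where M = ⌊ℓ/(n−1)⌋ if n is even and M = ⌊(2ℓ + n − 1)/(2(n−1))⌋ if n is odd. Then the complete graph K_n contains m (0,ℓ)-disjoint spanning trees, but does not contain m + 1 (0,ℓ)-disjoint spanning trees; that is, the maximum number of (0,ℓ)-disjoint spanning trees in K_n equals m. -/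
set_option maxHeartbeats 1000000
set_option linter.unusedSectionVars false


open SimpleGraph

variable {V : Type*}

open Walk

section ParentTree
variable {V : Type*} [DecidableEq V]

def pG (p : V → V) : SimpleGraph V := SimpleGraph.fromRel (fun v w => p v = w)

lemma pG_adj (p : V → V) (v w : V) : (pG p).Adj v w ↔ v ≠ w ∧ (p v = w ∨ p w = v) :=
  SimpleGraph.fromRel_adj _ v w

instance pG_decAdj (p : V → V) : DecidableRel (pG p).Adj :=
  fun v w => decidable_of_iff _ (pG_adj p v w).symm

variable {p : V → V} {rk : V → ℕ} {r : V}

lemma pG_edgeSet (hr : p r = r) (hd : ∀ v, v ≠ r → rk (p v) < rk v) :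
    (pG p).edgeSet = (fun v => s(v, p v)) '' {v | v ≠ r} := by
  ext e
  induction e using Sym2.ind with
  | _ v w =>
    rw [SimpleGraph.mem_edgeSet, pG_adj]
    constructor
    · rintro ⟨hne, h | h⟩
      · exact ⟨v, by rintro rfl; rw [hr] at h; exact hne h, by simp [h]⟩
      · refine ⟨w, by rintro rfl; rw [hr] at h; exact hne h.symm, ?_⟩
        simp only [h]; exact Sym2.eq_swap
    · rintro ⟨x, hx, hxe⟩
      have hpx : p x ≠ x := fun h => absurd (h ▸ hd x hx) (lt_irrefl _)
      simp only at hxe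
      rw [Sym2.eq_iff] at hxe
      rcases hxe with ⟨rfl, rfl⟩ | ⟨rfl, rfl⟩
      · exact ⟨fun h => hpx h.symm, Or.inl rfl⟩
      · exact ⟨hpx, Or.inr rfl⟩

lemma pG_reachable (hr : p r = r) (hd : ∀ v, v ≠ r → rk (p v) < rk v) (v : V) :
    (pG p).Reachable v r := by
  by_cases hv : v = r
  · exact hv ▸ Reachable.refl _
  · have hlt := hd v hv
    have h1 : (pG p).Adj v (p v) := by
      rw [pG_adj]
      exact ⟨fun h => by rw [← h] at hlt; omega, Or.inl rfl⟩
    exact (h1.reachable).trans (pG_reachable hr hd (p v))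
termination_by rk v
decreasing_by exact hd v hv

lemma pG_connected [Nonempty V] (hr : p r = r) (hd : ∀ v, v ≠ r → rk (p v) < rk v) :
    (pG p).Connected :=
  ⟨fun u v => (pG_reachable hr hd u).trans (pG_reachable hr hd v).symm⟩

lemma pG_acyclic (hr : p r = r) (hd : ∀ v, v ≠ r → rk (p v) < rk v) :
    (pG p).IsAcyclic := by
  intro v c hc
  classical
  obtain ⟨u, hu, hmax⟩ := Finset.exists_max_image c.support.toFinset rk
    ⟨v, by simp [Walk.start_mem_support]⟩
  rw [List.mem_toFinset] at hu
  have hmax' : ∀ x ∈ c.support, rk x ≤ rk u := fun x hx => hmax x (List.mem_toFinset.2 hx)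
  have key : ∀ x, (pG p).Adj u x → rk x ≤ rk u → x = p u := by
    intro x hadj hrk
    rw [pG_adj] at hadj
    rcases hadj.2 with h | h
    · exact h.symm
    · exfalso
      have hxr : x ≠ r := by rintro rfl; rw [hr] at h; exact hadj.1 h.symm
      have := hd x hxr
      rw [h] at this
      omega
  set c' := c.rotate u hu with hc'def
  have hc'cyc : c'.IsCycle := hc.rotate hu
  have hlen : 3 ≤ c'.length := hc'cyc.three_le_length
  have hsupp : ∀ x, x ∈ c'.support → rk x ≤ rk u := by
    intro x hx
    rw [Walk.support_eq_cons c'] at hx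
    rcases List.mem_cons.1 hx with rfl | h
    · exact le_refl _
    · have hperm := (Walk.support_rotate c u hu).perm
      exact hmax' x (List.mem_of_mem_tail (hperm.mem_iff.1 h))
  -- decompose c'
  obtain ⟨x, hadjx, q, hq⟩ := Walk.not_nil_iff.1 hc'cyc.not_nil
  -- decompose c'.reverse
  have hrevnil : ¬ c'.reverse.Nil := by
    rw [Walk.not_nil_iff_lt_length, Walk.length_reverse]; omega
  obtain ⟨y, hadjy, q2, hq2⟩ := Walk.not_nil_iff.1 hrevnil
  have hx : x = p u := by
    refine key x hadjx (hsupp x ?_)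
    rw [hq]
    exact List.mem_cons_of_mem _ (Walk.start_mem_support q)
  have hy : y = p u := by
    refine key y hadjy (hsupp y ?_)
    have : y ∈ c'.reverse.support := by
      rw [hq2]
      exact List.mem_cons_of_mem _ (Walk.start_mem_support q2)
    rw [Walk.support_reverse, List.mem_reverse] at this
    exact this
  -- now derive the edge duplication
  have hedges : c'.edges = s(u, x) :: q.edges := by rw [hq]; simp
  have hrevedges : c'.edges.reverse = s(u, y) :: q2.edges := by
    rw [← Walk.edges_reverse, hq2]; simp
  have hql : 2 ≤ q.edges.length := by
    have := Walk.length_edges q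
    have h2 : c'.length = q.length + 1 := by rw [hq]; simp
    omega
  have heq : s(u, x) :: q.edges = q2.edges.reverse ++ [s(u, y)] := by
    have := congrArg List.reverse hrevedges
    rw [List.reverse_reverse] at this
    rw [← hedges, this]
    simp
  have hnodup : (s(u, x) :: q.edges).Nodup := hedges ▸ hc'cyc.edges_nodup
  have hmem : s(u, x) ∈ q.edges := by
    rcases h2 : q2.edges.reverse with _ | ⟨a, as⟩
    · rw [h2] at heq
      simp at heq
      rw [Walk.length_edges, Walk.nil_iff_length_eq.1 heq.2] at hql
      simp at hql
    · rw [h2] at heq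
      rw [List.cons_append] at heq
      have ha : a = s(u, x) := (List.cons_eq_cons.1 heq).1.symm
      have hq' : q.edges = as ++ [s(u, y)] := (List.cons_eq_cons.1 heq).2
      rw [hq', hx, ← hy]
      exact List.mem_append_right _ (List.mem_singleton_self _)
  exact (List.nodup_cons.1 hnodup).1 hmem

lemma pG_edgeFinset [Fintype V] (hr : p r = r) (hd : ∀ v, v ≠ r → rk (p v) < rk v) :
    (pG p).edgeFinset = Finset.image (fun v => s(v, p v)) (Finset.univ.erase r) := by
  classical
  ext e
  rw [SimpleGraph.mem_edgeFinset, pG_edgeSet hr hd]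
  simp [Set.mem_image]

lemma pG_card_edgeFinset [Fintype V] (hr : p r = r) (hd : ∀ v, v ≠ r → rk (p v) < rk v) :
    (pG p).edgeFinset.card = Fintype.card V - 1 := by
  classical
  rw [pG_edgeFinset hr hd, Finset.card_image_of_injOn, Finset.card_erase_of_mem (Finset.mem_univ r),
    Finset.card_univ]
  intro a ha b hb hab
  simp only [Sym2.eq_iff] at hab
  rcases hab with ⟨rfl, _⟩ | ⟨h1, h2⟩
  · rfl
  · subst h1
    have ha' := hd _ (Finset.ne_of_mem_erase ha)
    have hb' := hd b (Finset.ne_of_mem_erase hb)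
    rw [h2] at ha'
    exfalso
    omega

lemma pG_inner_subset (p : V → V) :
    innerSet (pG p) ⊆ {v | ∃ w, w ≠ v ∧ p w = v} := by
  intro v hv
  by_contra hcon
  simp only [Set.mem_setOf_eq] at hcon
  push_neg at hcon
  have hsub : (pG p).neighborSet v ⊆ {p v} := by
    intro w hw
    rw [SimpleGraph.mem_neighborSet, pG_adj] at hw
    rcases hw.2 with h | h
    · exact Set.mem_singleton_iff.2 h.symm
    · exact absurd h (hcon w (fun hwv => hw.1 hwv.symm))
  have := Set.ncard_le_ncard hsub (Set.finite_singleton _)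
  rw [Set.ncard_singleton] at this
  have hv' : 2 ≤ ((pG p).neighborSet v).ncard := hv
  omega

end ParentTree

section Count
variable {α : Type*} [DecidableEq α] {k : ℕ}

lemma sum_card_eq_sum_mult (E : Fin k → Finset α) :
    ∑ i, (E i).card =
      ∑ e ∈ Finset.univ.biUnion E, (Finset.univ.filter (fun i => e ∈ E i)).card := by
  have h1 : ∀ i, (E i).card = ((Finset.univ.biUnion E).filter (fun e => e ∈ E i)).card := by
    intro i
    congr 1
    ext e
    simp only [Finset.mem_filter, Finset.mem_biUnion]
    exact ⟨fun h => ⟨⟨i, Finset.mem_univ i, h⟩, h⟩, fun h => h.2⟩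
  simp only [h1, Finset.card_filter]
  rw [Finset.sum_comm]

lemma mult_count_lower (E : Fin k → Finset α) :
    (Finset.univ.biUnion E).card
      + ((Finset.univ.biUnion E).filter
          (fun e => 2 ≤ (Finset.univ.filter (fun i => e ∈ E i)).card)).card
      ≤ ∑ i, (E i).card := by
  rw [sum_card_eq_sum_mult E, Finset.card_filter,
    Finset.card_eq_sum_ones (Finset.univ.biUnion E), ← Finset.sum_add_distrib]
  refine Finset.sum_le_sum fun e he => ?_
  have h1 : 1 ≤ (Finset.univ.filter (fun i => e ∈ E i)).card := by
    rw [Finset.mem_biUnion] at he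
    obtain ⟨i, _, hi⟩ := he
    exact Finset.card_pos.2 ⟨i, Finset.mem_filter.2 ⟨Finset.mem_univ i, hi⟩⟩
  split <;> omega

lemma mult_count_upper (E : Fin k → Finset α)
    (h2 : ∀ e, (Finset.univ.filter (fun i => e ∈ E i)).card ≤ 2) :
    ∑ i, (E i).card ≤
      (Finset.univ.biUnion E).card
      + ((Finset.univ.biUnion E).filter
          (fun e => 2 ≤ (Finset.univ.filter (fun i => e ∈ E i)).card)).card := by
  rw [sum_card_eq_sum_mult E, Finset.card_filter,
    Finset.card_eq_sum_ones (Finset.univ.biUnion E), ← Finset.sum_add_distrib]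
  refine Finset.sum_le_sum fun e he => ?_
  have := h2 e
  split <;> omega

end Count

/-- parent function for a double star on pair `i` (centers `2i`, `2i+1`). -/
def pdblN (i v : ℕ) : ℕ :=
  if v / 2 = i then 2*i
  else if v / 2 < i then (if v % 2 = 0 then 2*i+1 else 2*i)
  else (if v % 2 = 0 then 2*i else 2*i+1)

/-- parent function (as ℕ) of the `k`-th tree of the construction. -/
def pN (s q c k v : ℕ) : ℕ :=
  if k < q then (if k < 2*s then k else c) else pdblN (s + (k - q)) v

/-- turn an ℕ-valued function into a `Fin n` one. -/
def pF (n : ℕ) (hn : 0 < n) (f : ℕ → ℕ) : Fin n → Fin n := fun v => ⟨f ↑v % n, Nat.mod_lt _ hn⟩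

lemma construction (n s q ℓ m : ℕ) (hn : 3 ≤ n) (hsq : 2*s ≤ q) (hq1 : q ≤ 2*s+1)
    (hqodd : q = 2*s+1 → n % 2 = 1) (hsp : s ≤ n/2) (hm : m = q + (n/2 - s))
    (hcost : m*(n-1) + (if n % 2 = 1 ∧ q = 2*s then n/2 - s else 0) ≤ n*(n-1)/2 + ℓ) :
    ∃ T : Fin m → SimpleGraph (Fin n),
      (∀ i, IsSpanningTree (⊤ : SimpleGraph (Fin n)) (T i)) ∧
      innerMulti T = ∅ ∧ (edgeMulti T).ncard ≤ ℓ := by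
  have hn0 : 0 < n := by omega
  have hqd : q = 2*s ∨ (q = 2*s+1 ∧ n % 2 = 1) := by
    rcases Nat.lt_or_ge q (2*s+1) with h | h
    · left; omega
    · right; exact ⟨by omega, hqodd (by omega)⟩
  have hqm : q ≤ m := by omega
  -- all parent values are < n
  have hPlt : ∀ k x, k < m → pN s q (n-1) k x < n := by
    intro k x hk
    simp only [pN, pdblN]
    split_ifs <;> omega
  set Tc : Fin m → SimpleGraph (Fin n) := fun k => pG (pF n hn0 (pN s q (n-1) ↑k)) with hTc
  have hpval : ∀ (k : ℕ) (hk : k < m) (v : Fin n),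
      ((pF n hn0 (pN s q (n-1) k)) v : ℕ) = pN s q (n-1) k ↑v := by
    intro k hk v
    simp only [pF]
    exact Nat.mod_eq_of_lt (hPlt k _ hk)
  -- roots and ranks
  have key : ∀ k : Fin m, ∃ (rk : Fin n → ℕ) (r : Fin n),
      pF n hn0 (pN s q (n-1) ↑k) r = r ∧
      ∀ v, v ≠ r → rk (pF n hn0 (pN s q (n-1) ↑k) v) < rk v := by
    intro k
    by_cases hk : (k : ℕ) < q
    · -- star
      refine ⟨fun v => if (v : ℕ) = (if (k:ℕ) < 2*s then (k:ℕ) else n-1) then 0 else 1,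
        ⟨if (k:ℕ) < 2*s then (k:ℕ) else n-1, by split_ifs <;> omega⟩, ?_, ?_⟩
      · apply Fin.ext
        rw [hpval _ k.isLt]
        simp only [pN, if_pos hk]
      · intro v hv
        have hvne : (v : ℕ) ≠ (if (k:ℕ) < 2*s then (k:ℕ) else n-1) := by
          intro h; apply hv; apply Fin.ext; rw [h]
        dsimp only
        rw [hpval _ k.isLt]
        simp only [pN, if_pos hk]
        simp [hvne]
    · -- double star on pair i
      have hkm := k.isLt
      refine ⟨fun v => if (v : ℕ) = 2*(s + ((k:ℕ) - q)) then 0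
          else if (v : ℕ) = 2*(s + ((k:ℕ) - q))+1 then 1 else 2,
        ⟨2*(s + ((k:ℕ) - q)), by omega⟩, ?_, ?_⟩
      · apply Fin.ext
        rw [hpval _ k.isLt]
        simp only [pN, pdblN, if_neg hk]
        split_ifs <;> omega
      · intro v hv
        have hvne : (v : ℕ) ≠ 2*(s + ((k:ℕ) - q)) := by
          intro h; exact hv (Fin.ext h)
        dsimp only
        rw [hpval _ k.isLt]
        simp only [pN, pdblN, if_neg hk]
        have hvlt := v.isLt
        split_ifs <;> omega
  haveI : Nonempty (Fin n) := ⟨⟨0, hn0⟩⟩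
  have hspan : ∀ k, IsSpanningTree (⊤ : SimpleGraph (Fin n)) (Tc k) := by
    intro k
    obtain ⟨rk, r, hr, hd⟩ := key k
    exact ⟨le_top, pG_connected hr hd, pG_acyclic hr hd⟩
  -- inner vertices are parent values
  have hrange : ∀ (k : Fin m) (v : Fin n), v ∈ innerSet (Tc k) →
      ∃ w : Fin n, (v : ℕ) = pN s q (n-1) ↑k ↑w := by
    intro k v hv
    obtain ⟨w, -, hw⟩ := pG_inner_subset _ hv
    exact ⟨w, by rw [← hw, hpval _ k.isLt]⟩
  have hinner : innerMulti Tc = ∅ := by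
    rw [Set.eq_empty_iff_forall_notMem]
    rintro v ⟨i, j, hij, hi, hj⟩
    obtain ⟨w1, h1⟩ := hrange i v hi
    obtain ⟨w2, h2⟩ := hrange j v hj
    have hijv : (i : ℕ) ≠ (j : ℕ) := fun h => hij (Fin.ext h)
    have him := i.isLt
    have hjm := j.isLt
    rcases hqd with ⟨hq2⟩ | ⟨hq2, hodd⟩ <;>
    · simp only [pN, pdblN] at h1 h2
      split_ifs at h1 h2 <;> omega
  -- membership of single edges
  have hedge : ∀ (k0 : ℕ) (hk : k0 < m) (v w : Fin n), (v : ℕ) ≠ (w : ℕ) →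
      pN s q (n-1) k0 ↑w = ↑v →
      s(v, w) ∈ Finset.univ.biUnion (fun k => (Tc k).edgeFinset) := by
    intro k0 hk v w hvw hp
    rw [Finset.mem_biUnion]
    refine ⟨⟨k0, hk⟩, Finset.mem_univ _, ?_⟩
    rw [SimpleGraph.mem_edgeFinset, SimpleGraph.mem_edgeSet]
    show (pG _).Adj v w
    rw [pG_adj]
    refine ⟨fun h => hvw (congrArg _ h), Or.inr ?_⟩
    apply Fin.ext
    rw [hpval _ hk]
    exact hp
  -- the exceptional edges
  set EXC : Finset (Sym2 (Fin n)) :=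
    (Finset.Ico s (n/2)).image
      (fun j => s((⟨(n-1) % n, Nat.mod_lt _ hn0⟩ : Fin n),
                  (⟨(2*j+1) % n, Nat.mod_lt _ hn0⟩ : Fin n))) with hEXC
  have hEXCcard : EXC.card ≤ n/2 - s := by
    refine le_trans Finset.card_image_le ?_
    simp [Nat.card_Ico]
  -- covering
  have hcover : ∀ v w : Fin n, (v : ℕ) ≠ (w : ℕ) →
      s(v, w) ∈ Finset.univ.biUnion (fun k => (Tc k).edgeFinset) ∨
      ((n % 2 = 1 ∧ q = 2*s) ∧ s(v, w) ∈ EXC) := by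
    intro v w hvw
    have hv := v.isLt
    have hw := w.isLt
    -- case: an endpoint is a small star center
    by_cases hva : (v : ℕ) < 2*s
    · exact Or.inl (hedge ↑v (by omega) v w hvw (by simp only [pN]; split_ifs <;> omega))
    by_cases hwa : (w : ℕ) < 2*s
    · rw [Sym2.eq_swap]
      exact Or.inl (hedge ↑w (by omega) w v (Ne.symm hvw)
        (by simp only [pN]; split_ifs <;> omega))
    rcases hqd with hq2 | ⟨hq2, hodd⟩
    · -- q = 2*s : no star at n-1
      by_cases hvc : n % 2 = 1 ∧ (v : ℕ) = n-1
      · -- v = c, n odd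
        by_cases hwpar : (w : ℕ) % 2 = 0
        · rw [Sym2.eq_swap]
          exact Or.inl (hedge (q + ((w:ℕ)/2 - s)) (by omega) w v hvw.symm
            (by simp only [pN, pdblN]; split_ifs <;> omega))
        · refine Or.inr ⟨⟨hvc.1, hq2⟩, ?_⟩
          rw [hEXC, Finset.mem_image]
          refine ⟨(w : ℕ)/2, by rw [Finset.mem_Ico]; omega, ?_⟩
          rw [Sym2.eq_iff]
          left
          constructor
          · apply Fin.ext
            show (n-1) % n = (v : ℕ)
            rw [Nat.mod_eq_of_lt (by omega)]
            omega
          · apply Fin.ext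
            show (2*((w:ℕ)/2)+1) % n = (w : ℕ)
            rw [Nat.mod_eq_of_lt (by omega)]
            omega
      by_cases hwc : n % 2 = 1 ∧ (w : ℕ) = n-1
      · by_cases hvpar : (v : ℕ) % 2 = 0
        · exact Or.inl (hedge (q + ((v:ℕ)/2 - s)) (by omega) v w hvw
            (by simp only [pN, pdblN]; split_ifs <;> omega))
        · refine Or.inr ⟨⟨hwc.1, hq2⟩, ?_⟩
          rw [hEXC, Finset.mem_image]
          refine ⟨(v : ℕ)/2, by rw [Finset.mem_Ico]; omega, ?_⟩
          rw [Sym2.eq_iff]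
          right
          constructor
          · apply Fin.ext
            show (n-1) % n = (w : ℕ)
            rw [Nat.mod_eq_of_lt (by omega)]
            omega
          · apply Fin.ext
            show (2*((v:ℕ)/2)+1) % n = (v : ℕ)
            rw [Nat.mod_eq_of_lt (by omega)]
            omega
      · -- generic pair case
        left
        have hv2 : (v : ℕ) < 2*(n/2) := by omega
        have hw2 : (w : ℕ) < 2*(n/2) := by omega
        by_cases hjk : (v : ℕ)/2 = (w : ℕ)/2
        · by_cases hp1 : (v : ℕ) % 2 = 0
          · exact hedge (q + ((v:ℕ)/2 - s)) (by omega) v w hvw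
              (by simp only [pN, pdblN]; split_ifs <;> omega)
          · rw [Sym2.eq_swap]
            exact hedge (q + ((w:ℕ)/2 - s)) (by omega) w v hvw.symm
              (by simp only [pN, pdblN]; split_ifs <;> omega)
        · by_cases hlt : (v : ℕ)/2 < (w : ℕ)/2
          · by_cases hpar : (v : ℕ) % 2 = (w : ℕ) % 2
            · exact hedge (q + ((v:ℕ)/2 - s)) (by omega) v w hvw
                (by simp only [pN, pdblN]; split_ifs <;> omega)
            · rw [Sym2.eq_swap]
              exact hedge (q + ((w:ℕ)/2 - s)) (by omega) w v hvw.symm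
                (by simp only [pN, pdblN]; split_ifs <;> omega)
          · by_cases hpar : (v : ℕ) % 2 = (w : ℕ) % 2
            · rw [Sym2.eq_swap]
              exact hedge (q + ((w:ℕ)/2 - s)) (by omega) w v hvw.symm
                (by simp only [pN, pdblN]; split_ifs <;> omega)
            · exact hedge (q + ((v:ℕ)/2 - s)) (by omega) v w hvw
                (by simp only [pN, pdblN]; split_ifs <;> omega)
    · -- q = 2*s+1 : star at n-1 = c
      by_cases hvc : (v : ℕ) = n-1
      · left
        exact hedge (2*s) (by omega) v w hvw (by simp only [pN]; split_ifs <;> omega)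
      by_cases hwc : (w : ℕ) = n-1
      · left
        rw [Sym2.eq_swap]
        exact hedge (2*s) (by omega) w v hvw.symm (by simp only [pN]; split_ifs <;> omega)
      · -- generic pair case again
        left
        have hv2 : (v : ℕ) < 2*(n/2) := by omega
        have hw2 : (w : ℕ) < 2*(n/2) := by omega
        by_cases hjk : (v : ℕ)/2 = (w : ℕ)/2
        · by_cases hp1 : (v : ℕ) % 2 = 0
          · exact hedge (q + ((v:ℕ)/2 - s)) (by omega) v w hvw
              (by simp only [pN, pdblN]; split_ifs <;> omega)
          · rw [Sym2.eq_swap]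
            exact hedge (q + ((w:ℕ)/2 - s)) (by omega) w v hvw.symm
              (by simp only [pN, pdblN]; split_ifs <;> omega)
        · by_cases hlt : (v : ℕ)/2 < (w : ℕ)/2
          · by_cases hpar : (v : ℕ) % 2 = (w : ℕ) % 2
            · exact hedge (q + ((v:ℕ)/2 - s)) (by omega) v w hvw
                (by simp only [pN, pdblN]; split_ifs <;> omega)
            · rw [Sym2.eq_swap]
              exact hedge (q + ((w:ℕ)/2 - s)) (by omega) w v hvw.symm
                (by simp only [pN, pdblN]; split_ifs <;> omega)
          · by_cases hpar : (v : ℕ) % 2 = (w : ℕ) % 2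
            · rw [Sym2.eq_swap]
              exact hedge (q + ((w:ℕ)/2 - s)) (by omega) w v hvw.symm
                (by simp only [pN, pdblN]; split_ifs <;> omega)
            · exact hedge (q + ((v:ℕ)/2 - s)) (by omega) v w hvw
                (by simp only [pN, pdblN]; split_ifs <;> omega)
  -- counting
  set E : Fin m → Finset (Sym2 (Fin n)) := fun k => (Tc k).edgeFinset with hE_def
  have hcardE : ∀ k, (E k).card = n - 1 := by
    intro k
    obtain ⟨rk, r, hr, hd⟩ := key k
    have h := pG_card_edgeFinset hr hd
    rw [Fintype.card_fin] at h
    simp only [hE_def]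
    exact h
  have hsum : ∑ k, (E k).card = m * (n - 1) := by
    rw [Finset.sum_congr rfl (fun i _ => hcardE i)]
    simp [Finset.sum_const, Finset.card_univ, mul_comm]
  have hA := mult_count_lower E
  have hco : edgeMulti Tc =
      ↑((Finset.univ.biUnion E).filter
        (fun e => 2 ≤ (Finset.univ.filter (fun i => e ∈ E i)).card)) := by
    ext e
    simp only [edgeMulti, Set.mem_setOf_eq, Finset.coe_filter, Finset.mem_biUnion,
      Finset.mem_univ, true_and, hE_def, SimpleGraph.mem_edgeFinset]
    constructor
    · rintro ⟨i, j, hij, hi, hj⟩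
      refine ⟨⟨i, hi⟩, ?_⟩
      rw [show (2 : ℕ) = 1 + 1 from rfl, ← Nat.lt_iff_add_one_le, Finset.one_lt_card]
      exact ⟨i, Finset.mem_filter.2 ⟨Finset.mem_univ i, hi⟩,
        j, Finset.mem_filter.2 ⟨Finset.mem_univ j, hj⟩, hij⟩
    · rintro ⟨-, hcard⟩
      rw [show (2 : ℕ) = 1 + 1 from rfl, ← Nat.lt_iff_add_one_le, Finset.one_lt_card] at hcard
      obtain ⟨i, hi, j, hj, hij⟩ := hcard
      exact ⟨i, j, hij, (Finset.mem_filter.1 hi).2, (Finset.mem_filter.1 hj).2⟩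
  have hB : n*(n-1)/2 ≤ (Finset.univ.biUnion E).card
      + (if n % 2 = 1 ∧ q = 2*s then n/2 - s else 0) := by
    have htopcard : (⊤ : SimpleGraph (Fin n)).edgeFinset.card = n*(n-1)/2 := by
      rw [SimpleGraph.card_edgeFinset_top_eq_card_choose_two, Fintype.card_fin,
        Nat.choose_two_right]
    split_ifs with hcond
    · have hsubset : (⊤ : SimpleGraph (Fin n)).edgeFinset ⊆ (Finset.univ.biUnion E) ∪ EXC := by
        intro e he
        induction e using Sym2.ind with
        | _ v w =>
          rw [SimpleGraph.mem_edgeFinset, SimpleGraph.mem_edgeSet, SimpleGraph.top_adj] at he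
          have hvw : (v : ℕ) ≠ (w : ℕ) := fun h => he (Fin.ext h)
          rw [Finset.mem_union]
          rcases hcover v w hvw with h | ⟨-, h⟩
          · exact Or.inl h
          · exact Or.inr h
      have h1 := Finset.card_le_card hsubset
      have h2 := Finset.card_union_le (Finset.univ.biUnion E) EXC
      omega
    · have hsubset : (⊤ : SimpleGraph (Fin n)).edgeFinset ⊆ Finset.univ.biUnion E := by
        intro e he
        induction e using Sym2.ind with
        | _ v w =>
          rw [SimpleGraph.mem_edgeFinset, SimpleGraph.mem_edgeSet, SimpleGraph.top_adj] at he
          have hvw : (v : ℕ) ≠ (w : ℕ) := fun h => he (Fin.ext h)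
          rcases hcover v w hvw with h | ⟨hc, h⟩
          · exact h
          · exact absurd hc hcond
      have h1 := Finset.card_le_card hsubset
      omega
  refine ⟨Tc, hspan, hinner, ?_⟩
  rw [hco, Set.ncard_coe_finset]
  set D := ((Finset.univ.biUnion E).filter
    (fun e => 2 ≤ (Finset.univ.filter (fun i => e ∈ E i)).card)).card
  set U := (Finset.univ.biUnion E).card
  set exc := (if n % 2 = 1 ∧ q = 2*s then n/2 - s else 0)
  have hSig : (Finset.univ : Finset (Fin m)).sum (fun k => (E k).card) = m * (n-1) := hsum
  linarith [hA, hB, hcost, hSig]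


lemma walk_mem_closed {G : SimpleGraph V} {S : Set V}
    (hS : ∀ a ∈ S, ∀ b, G.Adj a b → b ∈ S) {x w : V} (hw : G.Walk x w) (hx : x ∈ S) :
    w ∈ S := by
  induction hw with
  | nil => exact hx
  | cons h _ ih => exact ih (hS _ hx _ h)

lemma exists_inner_endpoint [Fintype V] {G : SimpleGraph V} (hcard : 3 ≤ Fintype.card V)
    (hconn : G.Connected) {u v : V} (huv : G.Adj u v) :
    u ∈ innerSet G ∨ v ∈ innerSet G := by
  by_contra hcon
  push_neg at hcon
  obtain ⟨h1, h2⟩ := hcon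
  simp only [innerSet, Set.mem_setOf_eq, not_le] at h1 h2
  have hnbr : ∀ {a b : V}, G.Adj a b → (G.neighborSet a).ncard < 2 →
      ∀ c, G.Adj a c → c = b := by
    intro a b hab hlt c hac
    by_contra hne
    have : 1 < (G.neighborSet a).ncard := by
      rw [Set.one_lt_ncard_iff (Set.toFinite _)]
      exact ⟨c, b, hac, hab, hne⟩
    omega
  have hclosed : ∀ a ∈ ({u, v} : Set V), ∀ b, G.Adj a b → b ∈ ({u, v} : Set V) := by
    rintro a (rfl | rfl) b hab
    · exact Or.inr (hnbr huv h1 b hab)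
    · exact Or.inl (hnbr huv.symm h2 b hab)
  have hsub : (Set.univ : Set V) ⊆ {u, v} := by
    intro w _
    exact walk_mem_closed hclosed (hconn u w).some (Or.inl rfl)
  have := Set.ncard_le_ncard hsub (Set.toFinite _)
  rw [Set.ncard_univ] at this
  have h5 : ({u, v} : Set V).ncard ≤ 2 := by
    apply le_trans (Set.ncard_insert_le _ _)
    rw [Set.ncard_singleton]
  rw [Nat.card_eq_fintype_card] at this
  omega

lemma connected_exists_inner [Fintype V] {G : SimpleGraph V} (hcard : 3 ≤ Fintype.card V)
    (hconn : G.Connected) : ∃ v, v ∈ innerSet G := by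
  have : 1 < Fintype.card V := by omega
  obtain ⟨u, w, hne⟩ := Fintype.exists_pair_of_one_lt_card this
  obtain ⟨p⟩ := hconn u w
  cases p with
  | nil => exact absurd rfl hne
  | cons h _ => rcases exists_inner_endpoint hcard hconn h with h' | h'
                · exact ⟨_, h'⟩
                · exact ⟨_, h'⟩


open Classical in
lemma upper_bound {n k : ℕ} (hn : 3 ≤ n) (ℓ : ℕ) (T : Fin k → SimpleGraph (Fin n))
    (hT : ∀ i, IsSpanningTree (⊤ : SimpleGraph (Fin n)) (T i))
    (hI : innerMulti T = ∅) (hE : (edgeMulti T).ncard ≤ ℓ) :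
    k ≤ n ∧ k * (n - 1) ≤ n * (n - 1) / 2 + ℓ := by
  have hcard : Fintype.card (Fin n) = n := Fintype.card_fin n
  have hIm : ∀ x, x ∉ innerMulti T := by
    rw [Set.eq_empty_iff_forall_notMem] at hI; exact hI
  have htree : ∀ i, (T i).IsTree := fun i => ⟨(hT i).2.1, (hT i).2.2⟩
  -- part 1 : k ≤ n
  have hkn : k ≤ n := by
    have hf : ∀ i : Fin k, ∃ v, v ∈ innerSet (T i) := fun i =>
      connected_exists_inner (by omega) (hT i).2.1
    choose f hf using hf
    have hinj : Function.Injective f := by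
      intro i j hij
      by_contra hne
      exact hIm (f i) ⟨i, j, hne, hf i, hij ▸ hf j⟩
    have := Fintype.card_le_of_injective f hinj
    simpa using this
  refine ⟨hkn, ?_⟩
  -- part 2 : edge counting
  set E : Fin k → Finset (Sym2 (Fin n)) := fun i => (T i).edgeFinset with hE_def
  have hcardE : ∀ i, (E i).card = n - 1 := by
    intro i
    have := (htree i).card_edgeFinset
    rw [hcard] at this
    simp only [hE_def]
    omega
  have hmult2 : ∀ e, (Finset.univ.filter (fun i => e ∈ E i)).card ≤ 2 := by
    intro e
    by_contra hcon
    push_neg at hcon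
    rw [Finset.two_lt_card_iff] at hcon
    obtain ⟨a, b, c, ha, hb, hc, hab, hac, hbc⟩ := hcon
    have ha' := mem_edgeFinset.1 (Finset.mem_filter.1 ha).2
    have hb' := mem_edgeFinset.1 (Finset.mem_filter.1 hb).2
    have hc' := mem_edgeFinset.1 (Finset.mem_filter.1 hc).2
    induction e using Sym2.ind with
    | _ u v =>
      rw [SimpleGraph.mem_edgeSet] at ha' hb' hc'
      have hu : 3 ≤ Fintype.card (Fin n) := by omega
      rcases exists_inner_endpoint hu (hT a).2.1 ha' with h1 | h1 <;>
        rcases exists_inner_endpoint hu (hT b).2.1 hb' with h2 | h2 <;>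
        rcases exists_inner_endpoint hu (hT c).2.1 hc' with h3 | h3 <;>
        first
          | exact hIm _ ⟨a, b, hab, h1, h2⟩
          | exact hIm _ ⟨a, c, hac, h1, h3⟩
          | exact hIm _ ⟨b, c, hbc, h2, h3⟩
  have hub := mult_count_upper E hmult2
  have hU : (Finset.univ.biUnion E).card ≤ n * (n - 1) / 2 := by
    have hsub : Finset.univ.biUnion E ⊆ (⊤ : SimpleGraph (Fin n)).edgeFinset := by
      intro e he
      rw [Finset.mem_biUnion] at he
      obtain ⟨i, -, hi⟩ := he
      rw [mem_edgeFinset] at hi ⊢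
      exact (SimpleGraph.edgeSet_mono (hT i).1) hi
    have := Finset.card_le_card hsub
    rw [SimpleGraph.card_edgeFinset_top_eq_card_choose_two, hcard, Nat.choose_two_right] at this
    exact this
  have hD : ((Finset.univ.biUnion E).filter
      (fun e => 2 ≤ (Finset.univ.filter (fun i => e ∈ E i)).card)).card ≤ ℓ := by
    have hco : edgeMulti T =
        ↑((Finset.univ.biUnion E).filter
          (fun e => 2 ≤ (Finset.univ.filter (fun i => e ∈ E i)).card)) := by
      ext e
      simp only [edgeMulti, Set.mem_setOf_eq, Finset.coe_filter, Finset.mem_biUnion,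
        Finset.mem_univ, true_and, hE_def, mem_edgeFinset]
      constructor
      · rintro ⟨i, j, hij, hi, hj⟩
        refine ⟨⟨i, hi⟩, ?_⟩
        rw [show (2 : ℕ) = 1 + 1 from rfl, ← Nat.lt_iff_add_one_le, Finset.one_lt_card]
        exact ⟨i, Finset.mem_filter.2 ⟨Finset.mem_univ i, hi⟩,
          j, Finset.mem_filter.2 ⟨Finset.mem_univ j, hj⟩, hij⟩
      · rintro ⟨-, hcard⟩
        rw [show (2 : ℕ) = 1 + 1 from rfl, ← Nat.lt_iff_add_one_le, Finset.one_lt_card] at hcard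
        obtain ⟨i, hi, j, hj, hij⟩ := hcard
        exact ⟨i, j, hij, (Finset.mem_filter.1 hi).2, (Finset.mem_filter.1 hj).2⟩
    rw [hco, Set.ncard_coe_finset] at hE
    exact hE
  have hsum : ∑ i, (E i).card = k * (n - 1) := by
    rw [Finset.sum_congr rfl (fun i _ => hcardE i)]
    simp [Finset.sum_const, Finset.card_univ, mul_comm]
  omega



/-- The maximum number of (0,ℓ)-disjoint spanning trees in `Kₙ` equals
`⌊n/2⌋ + min M ⌈n/2⌉`, where `M = ⌊ℓ/(n-1)⌋` for even `n` and
`M = ⌊(2ℓ + n - 1)/(2(n-1))⌋` for odd `n`. -/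
theorem completeGraph_dst_zero_ell (n ℓ M m : ℕ) (hn : 3 ≤ n)
    (hM : M = if Even n then ℓ / (n - 1) else (2 * ℓ + n - 1) / (2 * (n - 1)))
    (hm : m = n / 2 + min M ((n + 1) / 2)) :
    (∃ T : Fin m → SimpleGraph (Fin n),
      (∀ i, IsSpanningTree (⊤ : SimpleGraph (Fin n)) (T i)) ∧
      innerMulti T = ∅ ∧ (edgeMulti T).ncard ≤ ℓ) ∧
    ¬ (∃ T : Fin (m + 1) → SimpleGraph (Fin n),
      (∀ i, IsSpanningTree (⊤ : SimpleGraph (Fin n)) (T i)) ∧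
      innerMulti T = ∅ ∧ (edgeMulti T).ncard ≤ ℓ) := by
  constructor
  · -- existence
    set t := min M ((n + 1) / 2) with ht
    have htM : t ≤ M := Nat.min_le_left _ _
    have htn : t ≤ (n + 1) / 2 := Nat.min_le_right _ _
    rcases Nat.even_or_odd n with he | ho
    · -- n even
      have hpar : n % 2 = 0 := Nat.even_iff.1 he
      have hM' : M = ℓ / (n - 1) := by rw [hM, if_pos he]
      have hdiv := Nat.div_add_mod ℓ (n - 1)
      have hmod : ℓ % (n - 1) < n - 1 := Nat.mod_lt _ (by omega)
      refine construction n t (2*t) ℓ m hn (by omega) (by omega) (by omega) (by omega)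
        (by omega) ?_
      rw [if_neg (by omega : ¬(n % 2 = 1 ∧ 2*t = 2*t))]
      have hC : n*(n-1)/2 = (n/2)*(n-1) := by
        obtain ⟨a, ha⟩ : ∃ a, n = 2*a := ⟨n/2, by omega⟩
        subst ha
        have h1 : 2*a/2 = a := by omega
        have h2 : 2*a*(2*a-1) = 2*(a*(2*a-1)) := by ring
        rw [h1, h2, Nat.mul_div_cancel_left _ (by norm_num : 0 < 2)]
      have hexp : m*(n-1) = (n/2)*(n-1) + t*(n-1) := by rw [hm]; ring
      have htb : t*(n-1) ≤ M*(n-1) := Nat.mul_le_mul_right _ htM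
      have hMb : M*(n-1) ≤ ℓ := by
        rw [hM']
        exact Nat.div_mul_le_self ℓ (n-1)
      linarith
    · -- n odd
      have hpar : n % 2 = 1 := Nat.odd_iff.1 ho
      have hM' : M = (2*ℓ + (n-1)) / (2*(n-1)) := by
        rw [hM, if_neg (Nat.not_even_iff_odd.2 ho)]
        congr 1
        omega
      have hdiv := Nat.div_add_mod (2*ℓ + (n-1)) (2*(n-1))
      have hmod : (2*ℓ + (n-1)) % (2*(n-1)) < 2*(n-1) := Nat.mod_lt _ (by omega)
      refine construction n (t-1) (2*t-1) ℓ m hn (by omega) (by omega) (fun _ => hpar)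
        (by omega) (by omega) ?_
      have hC : n*(n-1)/2 = (n/2)*(n-1) + n/2 := by
        obtain ⟨a, ha⟩ : ∃ a, n = 2*a+1 := ⟨n/2, by omega⟩
        subst ha
        have h1 : (2*a+1)/2 = a := by omega
        have h2 : 2*a+1-1 = 2*a := by omega
        rw [h1, h2]
        have h3 : (2*a+1)*(2*a) = 2*(a*(2*a) + a) := by ring
        rw [h3, Nat.mul_div_cancel_left _ (by norm_num : 0 < 2)]
      rcases Nat.eq_zero_or_pos t with ht0 | htpos
      · rw [if_pos (by omega : n % 2 = 1 ∧ 2*t-1 = 2*(t-1))]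
        have hexp : m*(n-1) = (n/2)*(n-1) := by rw [hm, ht0]; ring_nf
        omega
      · rw [if_neg (by omega : ¬(n % 2 = 1 ∧ 2*t-1 = 2*(t-1)))]
        have hexp : m*(n-1) = (n/2)*(n-1) + t*(n-1) := by rw [hm]; ring
        have htb : t*(n-1) ≤ M*(n-1) := Nat.mul_le_mul_right _ htM
        have hkey : 2*(M*(n-1)) ≤ 2*ℓ + (n-1) := by
          calc 2*(M*(n-1)) = (2*(n-1))*M := by ring
            _ = (2*(n-1))*((2*ℓ + (n-1))/(2*(n-1))) := by rw [hM']
            _ ≤ 2*ℓ + (n-1) := Nat.mul_div_le _ _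
        have hb2 : n - 1 = 2*(n/2) := by omega
        linarith
  · -- impossibility
    rintro ⟨T, hT, hI, hE⟩
    obtain ⟨h1, h2⟩ := upper_bound hn ℓ T hT hI hE
    rcases min_cases M ((n + 1) / 2) with ⟨hmin, hcmp⟩ | ⟨hmin, hcmp⟩ <;> rw [hmin] at hm
    · -- m = n/2 + M
      rcases Nat.even_or_odd n with he | ho
      · have hpar : n % 2 = 0 := Nat.even_iff.1 he
        have hM' : M = ℓ / (n - 1) := by rw [hM, if_pos he]
        have hdiv := Nat.div_add_mod ℓ (n - 1)
        have hmod : ℓ % (n - 1) < n - 1 := Nat.mod_lt _ (by omega)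
        have hC : n*(n-1)/2 = (n/2)*(n-1) := by
          obtain ⟨a, ha⟩ : ∃ a, n = 2*a := ⟨n/2, by omega⟩
          subst ha
          have h1 : 2*a/2 = a := by omega
          have h2 : 2*a*(2*a-1) = 2*(a*(2*a-1)) := by ring
          rw [h1, h2, Nat.mul_div_cancel_left _ (by norm_num : 0 < 2)]
        have hexp : (m+1)*(n-1) = (n/2)*(n-1) + M*(n-1) + (n-1) := by rw [hm]; ring
        have hcomm : (n-1)*(ℓ/(n-1)) = M*(n-1) := by rw [hM']; ring
        linarith
      · have hpar : n % 2 = 1 := Nat.odd_iff.1 ho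
        have hM' : M = (2*ℓ + (n-1)) / (2*(n-1)) := by
          rw [hM, if_neg (Nat.not_even_iff_odd.2 ho)]
          congr 1
          omega
        have hdiv := Nat.div_add_mod (2*ℓ + (n-1)) (2*(n-1))
        have hmod : (2*ℓ + (n-1)) % (2*(n-1)) < 2*(n-1) := Nat.mod_lt _ (by omega)
        have hC : n*(n-1)/2 = (n/2)*(n-1) + n/2 := by
          obtain ⟨a, ha⟩ : ∃ a, n = 2*a+1 := ⟨n/2, by omega⟩
          subst ha
          have h1 : (2*a+1)/2 = a := by omega
          have h2 : 2*a+1-1 = 2*a := by omega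
          rw [h1, h2]
          have h3 : (2*a+1)*(2*a) = 2*(a*(2*a) + a) := by ring
          rw [h3, Nat.mul_div_cancel_left _ (by norm_num : 0 < 2)]
        have hexp : (m+1)*(n-1) = (n/2)*(n-1) + M*(n-1) + (n-1) := by rw [hm]; ring
        have hcomm : (2*(n-1))*((2*ℓ + (n-1))/(2*(n-1))) = 2*(M*(n-1)) := by rw [hM']; ring
        have hb2 : n - 1 = 2*(n/2) := by omega
        linarith
    · -- m = n/2 + (n+1)/2 = n
      omega
end

section
/- Let n_1 ≥ 3 and n_2 ≥ 3 be integers. Then the cylinder C(n_1, n_2), i.e. the Cartesian product of the cycle C_{n_1} and the path P_{n_2}, contains two (0, n_1 − 2)-disjoint spanning trees. -/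
/-!
Write a vertex of `C_{n₁} □ P_{n₂}` as `(i, j)`, with `i` on the cycle and `j` on the path. Both
trees are given by parent maps that strictly decrease a rank, which makes them spanning trees.

`T₁`, rooted at `(0, 0)`, contains column `0`; each even row runs `1 → 2 → ⋯ → n₁ - 1 → 0`, and in
an odd row `(1, j)` hangs on `(0, j)` while `(i, j)`, `i ≥ 2`, hangs on `(i, j - 1)`.
`T₂`, rooted at `(1, 0)`, contains column `1`; each odd row runs `0 → n₁ - 1 → ⋯ → 2 → 1`, `(0, j)`
hangs on `(1, j)` for even `j`, and `(i, j)`, `i ≥ 2`, hangs on `(i, j - 1)` in even rows `j ≥ 2`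
and on `(i, 1)` in row `0`.

Inner vertices of a parent-map tree are parents, so the inner vertices of `T₁` lie in column `0` or
in even rows, those of `T₂` in column `1` or in odd rows. A common edge is traversed in opposite
directions by the two parent maps, i.e. it comes from a fixed point of `parent₂ ∘ parent₁`; these
are exactly the rungs `(i, 1) — (i, 0)` with `2 ≤ i`, and there are `n₁ - 2` of them.
-/

open SimpleGraph

variable {V : Type*}

variable {root : V} {p : V → V}

def parentGraph (root : V) (p : V → V) : SimpleGraph V where
  Adj u v := u ≠ v ∧ ((u ≠ root ∧ p u = v) ∨ (v ≠ root ∧ p v = u))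
  symm := ⟨fun _ _ h => ⟨h.1.symm, h.2.symm⟩⟩
  loopless := ⟨fun _ h => h.1 rfl⟩

@[simp]
lemma parentGraph_adj {u v : V} :
    (parentGraph root p).Adj u v ↔ u ≠ v ∧ ((u ≠ root ∧ p u = v) ∨ (v ≠ root ∧ p v = u)) :=
  Iff.rfl

lemma parentGraph_le {G : SimpleGraph V} (h : ∀ v ≠ root, G.Adj v (p v)) :
    parentGraph root p ≤ G := by
  rintro u v ⟨-, ⟨hu, rfl⟩ | ⟨hv, rfl⟩⟩
  · exact h u hu
  · exact (h v hv).symm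

section Rank

variable {α : Type*} [LinearOrder α] {rank : V → α}

lemma parentGraph_adj_parent (hrank : ∀ v ≠ root, rank (p v) < rank v) {v : V}
    (hv : v ≠ root) : (parentGraph root p).Adj v (p v) :=
  ⟨fun h => (hrank v hv).ne (congrArg rank h).symm, .inl ⟨hv, rfl⟩⟩

lemma eq_parent_of_parentGraph_adj_of_rank_le (hrank : ∀ v ≠ root, rank (p v) < rank v)
    {u v : V} (hadj : (parentGraph root p).Adj u v) (hle : rank v ≤ rank u) : v = p u := by
  obtain ⟨-, ⟨-, rfl⟩ | ⟨hv, rfl⟩⟩ := hadj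
  · rfl
  · exact absurd hle (hrank v hv).not_ge

lemma parentGraph_connected [WellFoundedLT α] (hrank : ∀ v ≠ root, rank (p v) < rank v) :
    (parentGraph root p).Connected := by
  have reach (v : V) : (parentGraph root p).Reachable v root := by
    induction v using (InvImage.wf rank wellFounded_lt).induction with
    | _ v ih =>
      by_cases hv : v = root
      · exact hv ▸ .rfl
      · exact (parentGraph_adj_parent hrank hv).reachable.trans (ih _ (hrank v hv))
  exact (connected_iff_exists_forall_reachable _).2 ⟨root, fun v => (reach v).symm⟩

/-- On a cycle through a vertex `u` of maximal rank, both neighbours of `u` would be `p u`. -/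
lemma parentGraph_isAcyclic (hrank : ∀ v ≠ root, rank (p v) < rank v) :
    (parentGraph root p).IsAcyclic := by
  classical
  intro w c hc
  obtain ⟨u, hu, hmax⟩ := c.support.toFinset.exists_max_image rank ⟨w, by simp⟩
  rw [List.mem_toFinset] at hu
  have hc' := hc.rotate hu
  have hle (i : ℕ) : rank ((c.rotate u hu).getVert i) ≤ rank u :=
    hmax _ (List.mem_toFinset.2 ((c.mem_support_rotate_iff u hu).1 (Walk.getVert_mem_support _ i)))
  have hnil := hc'.not_nil
  apply hc'.snd_ne_penultimate
  rw [eq_parent_of_parentGraph_adj_of_rank_le hrank (Walk.adj_snd hnil) (hle 1),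
    eq_parent_of_parentGraph_adj_of_rank_le hrank (Walk.adj_penultimate hnil).symm (hle _)]

lemma isSpanningTree_parentGraph [WellFoundedLT α] {G : SimpleGraph V}
    (hadj : ∀ v ≠ root, G.Adj v (p v)) (hrank : ∀ v ≠ root, rank (p v) < rank v) :
    IsSpanningTree G (parentGraph root p) :=
  ⟨parentGraph_le hadj, parentGraph_connected hrank, parentGraph_isAcyclic hrank⟩

end Rank

lemma innerSet_parentGraph_subset_range : innerSet (parentGraph root p) ⊆ Set.range p := by
  intro v hv
  by_contra hnot
  have hsub : (parentGraph root p).neighborSet v ⊆ {p v} := by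
    rintro u ⟨-, ⟨-, rfl⟩ | ⟨-, hu⟩⟩
    · rfl
    · exact absurd ⟨u, hu⟩ hnot
  have := Set.ncard_le_ncard hsub (Set.finite_singleton _)
  simp only [innerSet, Set.mem_ofPred_eq, Set.ncard_singleton] at hv this
  omega

lemma edgeSet_inter_parentGraph_subset {root' : V} {q : V → V} (hpq : ∀ v, p v ≠ q v) :
    (parentGraph root p).edgeSet ∩ (parentGraph root' q).edgeSet ⊆
      (fun x => s(x, p x)) '' Function.fixedPoints (q ∘ p) := by
  intro e
  induction e using Sym2.ind with
  | _ x y =>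
    simp only [Set.mem_inter_iff, mem_edgeSet, parentGraph_adj]
    rintro ⟨⟨-, ⟨-, rfl⟩ | ⟨-, rfl⟩⟩, ⟨-, ⟨-, hq⟩ | ⟨-, hq⟩⟩⟩
    · exact absurd hq.symm (hpq x)
    · exact ⟨x, hq, rfl⟩
    · exact ⟨y, hq, Sym2.eq_swap⟩
    · exact absurd hq.symm (hpq y)

lemma ncard_edgeSet_inter_parentGraph_le [Finite V] {root' : V} {q : V → V}
    (hpq : ∀ v, p v ≠ q v) :
    ((parentGraph root p).edgeSet ∩ (parentGraph root' q).edgeSet).ncard ≤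
      (Function.fixedPoints (q ∘ p)).ncard :=
  (Set.ncard_le_ncard (edgeSet_inter_parentGraph_subset hpq) (Set.toFinite _)).trans
    (Set.ncard_image_le (Set.toFinite _))

lemma cycleGraph_adj_of_val_succ {n : ℕ} (hn : 2 ≤ n) {a b : Fin n}
    (h : b.val = a.val + 1 ∨ (a.val = n - 1 ∧ b.val = 0)) : (cycleGraph n).Adj a b := by
  rw [cycleGraph_adj']
  right
  rcases h with h | ⟨ha, hb⟩
  · rw [Fin.coe_sub_iff_le.2 (Fin.le_def.2 (by omega))]
    omega
  · rw [Fin.coe_sub_iff_lt.2 (Fin.lt_def.2 (by omega))]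
    omega

lemma boxProd_cycleGraph_pathGraph_adj_of_val {n₁ n₂ : ℕ} (hn : 2 ≤ n₁) {a b : Fin n₁ × Fin n₂}
    (h : (a.2.val = b.2.val ∧ (b.1.val = a.1.val + 1 ∨ a.1.val = b.1.val + 1 ∨
        (a.1.val = n₁ - 1 ∧ b.1.val = 0) ∨ (b.1.val = n₁ - 1 ∧ a.1.val = 0))) ∨
      (a.1.val = b.1.val ∧ (b.2.val = a.2.val + 1 ∨ a.2.val = b.2.val + 1))) :
    (cycleGraph n₁ □ pathGraph n₂).Adj a b := by
  rw [boxProd_adj, pathGraph_adj]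
  rcases h with ⟨h2, h | h | h | h⟩ | ⟨h1, h⟩
  · exact .inl ⟨cycleGraph_adj_of_val_succ hn (.inl h), Fin.ext h2⟩
  · exact .inl ⟨(cycleGraph_adj_of_val_succ hn (.inl h)).symm, Fin.ext h2⟩
  · exact .inl ⟨cycleGraph_adj_of_val_succ hn (.inr h), Fin.ext h2⟩
  · exact .inl ⟨(cycleGraph_adj_of_val_succ hn (.inr h)).symm, Fin.ext h2⟩
  · exact .inr ⟨by omega, Fin.ext h1⟩

namespace Cylinder

variable {n₁ n₂ : ℕ}

def root₁ (h₁ : 3 ≤ n₁) (h₂ : 3 ≤ n₂) : Fin n₁ × Fin n₂ := (⟨0, by omega⟩, ⟨0, by omega⟩)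

def root₂ (h₁ : 3 ≤ n₁) (h₂ : 3 ≤ n₂) : Fin n₁ × Fin n₂ := (⟨1, by omega⟩, ⟨0, by omega⟩)

def parent₁ (h₁ : 3 ≤ n₁) (v : Fin n₁ × Fin n₂) : Fin n₁ × Fin n₂ :=
  if v.1.val = 0 then
    (v.1, ⟨v.2.val - 1, by omega⟩)
  else if v.1.val = 1 then
    (if v.2.val % 2 = 0 then (⟨2, by omega⟩, v.2) else (⟨0, by omega⟩, v.2))
  else if v.2.val % 2 = 0 then
    (if h : v.1.val = n₁ - 1 then (⟨0, by omega⟩, v.2) else (⟨v.1.val + 1, by omega⟩, v.2))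
  else (v.1, ⟨v.2.val - 1, by omega⟩)

def parent₂ (h₁ : 3 ≤ n₁) (h₂ : 3 ≤ n₂) (v : Fin n₁ × Fin n₂) : Fin n₁ × Fin n₂ :=
  if v.1.val = 1 then
    (v.1, ⟨v.2.val - 1, by omega⟩)
  else if v.1.val = 0 then
    (if v.2.val % 2 = 0 then (⟨1, by omega⟩, v.2) else (⟨n₁ - 1, by omega⟩, v.2))
  else if v.2.val % 2 = 1 then
    (⟨v.1.val - 1, by omega⟩, v.2)
  else if v.2.val = 0 then (v.1, ⟨1, by omega⟩)
  else (v.1, ⟨v.2.val - 1, by omega⟩)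

def rank₁ (v : Fin n₁ × Fin n₂) : ℕ ×ₗ ℕ :=
  toLex (v.2.val, if v.1.val = 0 then 0 else if v.1.val = 1 then n₁ + 1 else n₁ + 1 - v.1.val)

/-- `(i, 0)` with `i ≥ 2` points up to `(i, 1)`, so it is ranked as if it were in row `2`. -/
def rank₂ (v : Fin n₁ × Fin n₂) : ℕ ×ₗ ℕ :=
  toLex (if v.2.val = 0 then (if v.1.val < 2 then 0 else 2) else v.2.val,
    if v.1.val = 1 then 0 else if v.1.val = 0 then (if v.2.val % 2 = 0 then 1 else n₁)
    else v.1.val - 1)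

variable (h₁ : 3 ≤ n₁) (h₂ : 3 ≤ n₂)

lemma rank₁_parent₁_lt (v : Fin n₁ × Fin n₂) (hv : v ≠ root₁ h₁ h₂) :
    rank₁ (parent₁ h₁ v) < rank₁ v := by
  obtain ⟨⟨i, hi⟩, ⟨j, hj⟩⟩ := v
  simp only [root₁, ne_eq, Prod.ext_iff, Fin.ext_iff] at hv
  simp only [rank₁, Prod.Lex.toLex_lt_toLex, parent₁]
  split_ifs <;> dsimp only at * <;> omega

lemma rank₂_parent₂_lt (v : Fin n₁ × Fin n₂) (hv : v ≠ root₂ h₁ h₂) :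
    rank₂ (parent₂ h₁ h₂ v) < rank₂ v := by
  obtain ⟨⟨i, hi⟩, ⟨j, hj⟩⟩ := v
  simp only [root₂, ne_eq, Prod.ext_iff, Fin.ext_iff] at hv
  simp only [rank₂, Prod.Lex.toLex_lt_toLex, parent₂]
  split_ifs <;> dsimp only at * <;> omega

lemma parent₁_adj (v : Fin n₁ × Fin n₂) (hv : v ≠ root₁ h₁ h₂) :
    (cycleGraph n₁ □ pathGraph n₂).Adj v (parent₁ h₁ v) := by
  apply boxProd_cycleGraph_pathGraph_adj_of_val (by omega)
  obtain ⟨⟨i, hi⟩, ⟨j, hj⟩⟩ := v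
  simp only [root₁, ne_eq, Prod.ext_iff, Fin.ext_iff] at hv
  simp only [parent₁]
  split_ifs <;> dsimp only <;> omega

lemma parent₂_adj (v : Fin n₁ × Fin n₂) (hv : v ≠ root₂ h₁ h₂) :
    (cycleGraph n₁ □ pathGraph n₂).Adj v (parent₂ h₁ h₂ v) := by
  apply boxProd_cycleGraph_pathGraph_adj_of_val (by omega)
  obtain ⟨⟨i, hi⟩, ⟨j, hj⟩⟩ := v
  simp only [root₂, ne_eq, Prod.ext_iff, Fin.ext_iff] at hv
  simp only [parent₂]
  split_ifs <;> dsimp only <;> omega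

lemma parent₁_fst_eq_zero_or (v : Fin n₁ × Fin n₂) :
    (parent₁ h₁ v).1.val = 0 ∨ (2 ≤ (parent₁ h₁ v).1.val ∧ (parent₁ h₁ v).2.val % 2 = 0) := by
  simp only [parent₁]
  split_ifs <;> dsimp only <;> omega

lemma parent₂_fst_eq_one_or (v : Fin n₁ × Fin n₂) :
    (parent₂ h₁ h₂ v).1.val = 1 ∨
      (2 ≤ (parent₂ h₁ h₂ v).1.val ∧ (parent₂ h₁ h₂ v).2.val % 2 = 1) := by
  simp only [parent₂]
  split_ifs <;> dsimp only <;> omega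

lemma disjoint_range_parent₁_range_parent₂ :
    Disjoint (Set.range (parent₁ (n₂ := n₂) h₁)) (Set.range (parent₂ h₁ h₂)) := by
  rw [Set.disjoint_left]
  rintro _ ⟨u, rfl⟩ ⟨w, hw⟩
  have h₁u := parent₁_fst_eq_zero_or h₁ u
  have h₂w := parent₂_fst_eq_one_or h₁ h₂ w
  rw [hw] at h₂w
  omega

lemma parent₁_ne_parent₂ (v : Fin n₁ × Fin n₂) : parent₁ h₁ v ≠ parent₂ h₁ h₂ v := by
  simp only [parent₁, parent₂, ne_eq, Prod.ext_iff, Fin.ext_iff]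
  split_ifs <;> dsimp only <;> omega

lemma fixedPoints_parent₂_comp_parent₁_subset :
    Function.fixedPoints (parent₂ h₁ h₂ ∘ parent₁ h₁) ⊆ {x | 2 ≤ x.1.val ∧ x.2.val = 1} := by
  rintro ⟨⟨i, hi⟩, ⟨j, hj⟩⟩ h
  simp only [Function.mem_fixedPoints, Function.IsFixedPt, Function.comp_apply, parent₁, parent₂,
    Prod.ext_iff, Fin.ext_iff] at h
  simp only [Set.mem_ofPred_eq]
  split_ifs at h <;> dsimp only at * <;> omega

lemma ncard_fixedPoints_parent₂_comp_parent₁_le :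
    (Function.fixedPoints (parent₂ h₁ h₂ ∘ parent₁ h₁)).ncard ≤ n₁ - 2 := by
  let rung : Fin (n₁ - 2) → Fin n₁ × Fin n₂ := fun k => (⟨k + 2, by omega⟩, ⟨1, by omega⟩)
  have hrung : rung.Injective := fun k l h => by simpa [rung, Fin.ext_iff] using h
  calc _ ≤ (Set.range rung).ncard := by
        refine Set.ncard_le_ncard (fun x hx => ?_) (Set.toFinite _)
        obtain ⟨hx₁, hx₂⟩ := fixedPoints_parent₂_comp_parent₁_subset h₁ h₂ hx
        exact ⟨⟨x.1.val - 2, by omega⟩, Prod.ext (Fin.ext (by simp only [rung]; omega))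
          (Fin.ext (by simp [rung, hx₂]))⟩
    _ = n₁ - 2 := by
      rw [Set.ncard_range_of_injective hrung, Nat.card_eq_fintype_card, Fintype.card_fin]

end Cylinder

open Cylinder in
/-- The cylinder `C(n₁, n₂) = C_{n₁} □ P_{n₂}` contains two (0, n₁ - 2)-disjoint
spanning trees. -/
theorem cylinder_two_disjoint_trees (n₁ n₂ : ℕ) (h₁ : 3 ≤ n₁) (h₂ : 3 ≤ n₂) :
    ∃ T₁ T₂ : SimpleGraph (Fin n₁ × Fin n₂),
      IsSpanningTree (SimpleGraph.cycleGraph n₁ □ SimpleGraph.pathGraph n₂) T₁ ∧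
      IsSpanningTree (SimpleGraph.cycleGraph n₁ □ SimpleGraph.pathGraph n₂) T₂ ∧
      Disjoint (innerSet T₁) (innerSet T₂) ∧
      (T₁.edgeSet ∩ T₂.edgeSet).ncard ≤ n₁ - 2 := by
  refine ⟨parentGraph (root₁ h₁ h₂) (parent₁ h₁), parentGraph (root₂ h₁ h₂) (parent₂ h₁ h₂),
    isSpanningTree_parentGraph (parent₁_adj h₁ h₂) (rank₁_parent₁_lt h₁ h₂),
    isSpanningTree_parentGraph (parent₂_adj h₁ h₂) (rank₂_parent₂_lt h₁ h₂), ?_, ?_⟩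
  · exact (disjoint_range_parent₁_range_parent₂ h₁ h₂).mono
      innerSet_parentGraph_subset_range innerSet_parentGraph_subset_range
  · exact (ncard_edgeSet_inter_parentGraph_le (parent₁_ne_parent₂ h₁ h₂)).trans
      (ncard_fixedPoints_parent₂_comp_parent₁_le h₁ h₂)
end
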